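/- arXiv:2006.00806 — 8 statements merged into one kernel-verified Lean document; each statement's English description precedes it below -/
import Mathlib

section
/- Suppose λ < cf(κ) are uncountable cardinals and X is a Banach space of density κ such that X = ⋃_{ξ<λ} X_ξ where each X_ξ is a proper closed linear subspace of X. Then X does not admit an overcomplete set. -/
open Cardinal Set

universe u

/-- The density character of a topological space: the least cardinality of a dense subset. -/
noncomputable def dens (X : Type u) [TopologicalSpace X] : Cardinal.{u} :=
  ⨅ s : {s : Set X // Dense s}, Cardinal.mk ↥(s.1)

/-- A set is linearly dense if its closed linear span is the whole space. -/
def LinearlyDense {X : Type u} [NormedAddCommGroup X] [NormedSpace ℝ X] (S : Set X) : Prop :=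
  (Submodule.span ℝ S).topologicalClosure = ⊤

/-- A set `Y` is overcomplete in `X` if `|Y| = dens X` and every subset of `Y` of full
cardinality is linearly dense in `X`. -/
def Overcomplete {X : Type u} [NormedAddCommGroup X] [NormedSpace ℝ X] (Y : Set X) : Prop :=
  Cardinal.mk ↥Y = dens X ∧ ∀ Z ⊆ Y, Cardinal.mk ↥Z = Cardinal.mk ↥Y → LinearlyDense Z

/-!
Since `λ < cf κ`, the pigeonhole principle puts `κ` elements of a putative overcomplete set `Y`
into a single proper closed subspace `X_ξ`; these span a subspace whose closure lies in `X_ξ`,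
so they are not linearly dense.
-/

theorem Cardinal.exists_mk_inter_eq_of_subset_iUnion {α ι : Type u} {s : Set α}
    {t : ι → Set α} (hs : ℵ₀ ≤ #s) (hι : #ι < (#s).ord.cof) (hcover : s ⊆ ⋃ i, t i) :
    ∃ i, #↥(s ∩ t i) = #s := by
  choose f hf using fun x : s => mem_iUnion.1 (hcover x.2)
  obtain ⟨i, hi⟩ := infinite_pigeonhole f hs hι
  refine ⟨i, le_antisymm (mk_le_mk_of_subset inter_subset_left) ?_⟩
  calc #s = #↥(Subtype.val '' (f ⁻¹' {i})) := by rw [mk_image_eq Subtype.val_injective, hi]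
    _ ≤ #↥(s ∩ t i) := mk_le_mk_of_subset <| by
        rintro _ ⟨x, rfl : f x = i, rfl⟩
        exact ⟨x.2, hf x⟩

theorem not_linearlyDense_of_subset_submodule {X : Type u} [NormedAddCommGroup X]
    [NormedSpace ℝ X] {S : Set X} {p : Submodule ℝ X} (hp : IsClosed (p : Set X)) (hne : p ≠ ⊤)
    (hS : S ⊆ p) : ¬ LinearlyDense S := fun hdense =>
  hne <| top_le_iff.1 <| hdense ▸
    Submodule.topologicalClosure_minimal _ (Submodule.span_le.2 hS) hp

theorem stmt1_general {X : Type u} [NormedAddCommGroup X] [NormedSpace ℝ X]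
    {κ lam : Cardinal.{u}} (hκ : Cardinal.aleph0 < κ)
    (hcf : lam < (κ.ord).cof) (hdens : dens X = κ)
    {ι : Type u} (hι : Cardinal.mk ι = lam) (Xs : ι → Submodule ℝ X)
    (hclosed : ∀ i, IsClosed (Xs i : Set X)) (hproper : ∀ i, Xs i ≠ ⊤)
    (hcover : ∀ x : X, ∃ i, x ∈ Xs i) :
    ¬ ∃ Y : Set X, Overcomplete Y := by
  rintro ⟨Y, hYcard, hYdense⟩
  rw [hdens] at hYcard
  obtain ⟨i, hi⟩ := exists_mk_inter_eq_of_subset_iUnion (t := fun i => (Xs i : Set X))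
    (hYcard ▸ hκ.le) (hYcard ▸ hι ▸ hcf) fun y _ => mem_iUnion.2 (hcover y)
  exact not_linearlyDense_of_subset_submodule (hclosed i) (hproper i) inter_subset_right
    (hYdense _ inter_subset_left hi)

/-- if `X` has density `κ` and is the union of `λ < cf κ` proper closed
subspaces (`λ, κ` uncountable), then `X` admits no overcomplete set. -/
theorem stmt1 {X : Type u} [NormedAddCommGroup X] [NormedSpace ℝ X] [CompleteSpace X]
    {κ lam : Cardinal.{u}} (hlam : Cardinal.aleph0 < lam) (hκ : Cardinal.aleph0 < κ)
    (hcf : lam < (κ.ord).cof) (hdens : dens X = κ)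
    {ι : Type u} (hι : Cardinal.mk ι = lam) (Xs : ι → Submodule ℝ X)
    (hclosed : ∀ i, IsClosed (Xs i : Set X)) (hproper : ∀ i, Xs i ≠ ⊤)
    (hcover : ∀ x : X, ∃ i, x ∈ Xs i) :
    ¬ ∃ Y : Set X, Overcomplete Y :=
  stmt1_general hκ hcf hdens hι Xs hclosed hproper hcover
end

section
/- Let X be a Banach space, B a nonempty subset of ℕ, (x_n)_{n∈B} a family of norm-one vectors in X, and (λ_k)_{k∈ℕ} a sequence of distinct reals in the interval (0, 1/2). Define y_k = Σ_{n∈B} λ_k^n x_n for each k ∈ ℕ. Then for every infinite C ⊆ ℕ, the closed linear span of {y_k : k ∈ C} equals the closed linear span of {x_n : n ∈ B}. -/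
/-!
Every `y k` is a norm-convergent combination of the `x n`, which gives one inclusion. For the
other, let `φ` be a continuous functional vanishing on all `y k` with `k ∈ C`. Then the power
series `∑ φ (x n) tⁿ` (coefficients zero off `B`, bounded by `‖φ‖`) is analytic on `(-1, 1)` and
vanishes on the infinite set `{λ k | k ∈ C} ⊆ [0, 1/2]`, which accumulates inside `(-1, 1)`. By
the identity theorem all its coefficients vanish, i.e. `φ (x n) = 0` for `n ∈ B`, and Hahn–Banach
puts each `x n` in the closed span of the `y k`.
-/

open Cardinal Set

universe u

open scoped Topology
open FormalMultilinearSeries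

theorem Submodule.mem_topologicalClosure_of_forall_dual_eq_zero {E : Type*} [AddCommGroup E]
    [TopologicalSpace E] [IsTopologicalAddGroup E] [Module ℝ E] [ContinuousSMul ℝ E]
    [LocallyConvexSpace ℝ E] (p : Submodule ℝ E) {v : E}
    (h : ∀ φ : StrongDual ℝ E, (∀ z ∈ p, φ z = 0) → φ v = 0) :
    v ∈ p.topologicalClosure := by
  by_contra hv
  obtain ⟨φ, u, hφp, hφv⟩ := geometric_hahn_banach_closed_point
    p.topologicalClosure.convex p.isClosed_topologicalClosure hv
  -- a linear functional bounded above on a subspace vanishes on it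
  have hφ : ∀ z ∈ p, φ z = 0 := fun z hz => by
    by_contra hφz
    have := hφp (((u + 1) / φ z) • z) (smul_mem _ _ (p.le_topologicalClosure hz))
    rw [map_smul, smul_eq_mul, div_mul_cancel₀ _ hφz] at this
    linarith
  have h0 := hφp 0 (zero_mem _)
  rw [map_zero] at h0
  linarith [h φ hφ]

theorem eq_zero_of_tsum_mul_pow_eq_zero {a : ℕ → ℝ} {M : ℝ} (ha : ∀ n, |a n| ≤ M)
    {r : ℝ} (hr : r < 1) {S : Set ℝ} (hS : S.Infinite) (hSr : S ⊆ Metric.closedBall 0 r)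
    (hzero : ∀ t ∈ S, ∑' n, a n * t ^ n = 0) : a = 0 := by
  set p : FormalMultilinearSeries ℝ ℝ ℝ := ofScalars ℝ a
  have hp : ∀ t, p.sum t = ∑' n, a n * t ^ n := fun t => by
    simp only [FormalMultilinearSeries.sum, p, ofScalars_apply_eq, smul_eq_mul]
  have hrad : 1 ≤ p.radius := by
    rw [← ENNReal.coe_one]
    exact p.le_radius_of_bound M fun n => by simpa [p, ofScalars_norm] using ha n
  have hball : HasFPowerSeriesOnBall p.sum p 0 1 :=
    (p.hasFPowerSeriesOnBall (one_pos.trans_le hrad)).mono one_pos hrad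
  have hanalytic : AnalyticOnNhd ℝ p.sum (Metric.ball 0 1) := by
    simpa only [← ENNReal.ofReal_one, Metric.eball_ofReal] using hball.analyticOnNhd
  obtain ⟨t₀, ht₀, hacc⟩ := hS.exists_accPt_of_subset_isCompact (isCompact_closedBall 0 r) hSr
  have hfreq : ∃ᶠ t in 𝓝[≠] t₀, p.sum t = 0 := by
    rw [frequently_nhdsWithin_iff]
    exact (accPt_iff_frequently.mp hacc).mono fun t ht => ⟨(hp t).trans (hzero t ht.2), ht.1⟩
  have hvanish : Set.EqOn p.sum 0 (Metric.ball 0 1) :=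
    hanalytic.eqOn_zero_of_preconnected_of_frequently_eq_zero (convex_ball 0 1).isPreconnected
      (Metric.closedBall_subset_ball hr ht₀) hfreq
  have hp0 : p = 0 := hball.hasFPowerSeriesAt.eq_zero_of_eventually
    (Filter.eventually_of_mem (Metric.ball_mem_nhds 0 one_pos) hvanish)
  exact (ofScalars_series_eq_zero ℝ).mp hp0

section

variable {X : Type*} [NormedAddCommGroup X] [NormedSpace ℝ X]

theorem tsum_smul_mem_topologicalClosure_span (B : Set ℕ) (x : ℕ → X) (c : ℕ → ℝ) :
    ∑' n : B, c n • x n ∈ (Submodule.span ℝ (x '' B)).topologicalClosure :=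
  tsum_mem (Submodule.isClosed_topologicalClosure _) fun n =>
    Submodule.le_topologicalClosure _ (Submodule.smul_mem _ _ (Submodule.subset_span ⟨n, n.2, rfl⟩))

theorem summable_pow_smul_of_norm_le [CompleteSpace X] {B : Set ℕ} {x : ℕ → X} {M : ℝ}
    (hx : ∀ n ∈ B, ‖x n‖ ≤ M) {t : ℝ} (ht : |t| < 1) :
    Summable fun n : B => t ^ (n : ℕ) • x n := by
  refine .of_norm_bounded (((summable_geometric_of_lt_one (abs_nonneg t) ht).mul_left M).subtype B)
    fun n => ?_
  rw [norm_smul, norm_pow, Real.norm_eq_abs, mul_comm]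
  exact mul_le_mul_of_nonneg_right (hx n n.2) (by positivity)

theorem StrongDual.apply_tsum_pow_smul (φ : StrongDual ℝ X) {B : Set ℕ} {x : ℕ → X} {t : ℝ}
    (hsum : Summable fun n : B => t ^ (n : ℕ) • x n) :
    φ (∑' n : B, t ^ (n : ℕ) • x n) = ∑' n, B.indicator (fun n => φ (x n)) n * t ^ n := by
  simp only [φ.map_tsum hsum, map_smul, smul_eq_mul, ← Set.indicator_mul_left, mul_comm (t ^ _)]
  exact tsum_subtype B fun n => φ (x n) * t ^ n

theorem StrongDual.apply_eq_zero_of_apply_tsum_pow_smul_eq_zero [CompleteSpace X]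
    (φ : StrongDual ℝ X) {B : Set ℕ} {x : ℕ → X} (hx : ∀ n ∈ B, ‖x n‖ ≤ 1)
    {r : ℝ} (hr : r < 1) {S : Set ℝ} (hS : S.Infinite) (hSr : S ⊆ Metric.closedBall 0 r)
    (hzero : ∀ t ∈ S, φ (∑' n : B, t ^ (n : ℕ) • x n) = 0) :
    ∀ n ∈ B, φ (x n) = 0 := by
  have hbound (n : ℕ) : |B.indicator (fun n => φ (x n)) n| ≤ ‖φ‖ := by
    by_cases hn : n ∈ B
    · simpa [hn] using φ.le_opNorm_of_le (hx n hn)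
    · simp [hn]
  have hcoeff : B.indicator (fun n => φ (x n)) = 0 := by
    refine eq_zero_of_tsum_mul_pow_eq_zero hbound hr hS hSr fun t ht => ?_
    have ht1 : |t| < 1 := by simpa using (hSr ht).trans_lt hr
    rw [← φ.apply_tsum_pow_smul (summable_pow_smul_of_norm_le hx ht1), hzero t ht]
  intro n hn
  simpa [hn] using congrFun hcoeff n

end

theorem stmt2_general {X : Type u} [NormedAddCommGroup X] [NormedSpace ℝ X] [CompleteSpace X]
    (B : Set ℕ) (x : ℕ → X) (hx : ∀ n ∈ B, ‖x n‖ = 1)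
    (lam : ℕ → ℝ) (hinj : Function.Injective lam)
    (hmem : ∀ k, lam k ∈ Set.Ioo (0 : ℝ) (1/2))
    (y : ℕ → X) (hy : ∀ k, y k = ∑' n : B, (lam k) ^ (n : ℕ) • x (n : ℕ))
    (C : Set ℕ) (hC : C.Infinite) :
    (Submodule.span ℝ (y '' C)).topologicalClosure
      = (Submodule.span ℝ (x '' B)).topologicalClosure := by
  have hlam (k : ℕ) : lam k ∈ Metric.closedBall 0 (1 / 2) := by
    rw [Real.closedBall_eq_Icc]
    constructor <;> linarith [(hmem k).1, (hmem k).2]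
  apply le_antisymm
  · refine Submodule.topologicalClosure_minimal _ (Submodule.span_le.2 ?_)
      (Submodule.isClosed_topologicalClosure _)
    rintro _ ⟨k, -, rfl⟩
    rw [SetLike.mem_coe, hy k]
    exact tsum_smul_mem_topologicalClosure_span B x (lam k ^ ·)
  · refine Submodule.topologicalClosure_minimal _ (Submodule.span_le.2 ?_)
      (Submodule.isClosed_topologicalClosure _)
    rintro _ ⟨m, hm, rfl⟩
    refine Submodule.mem_topologicalClosure_of_forall_dual_eq_zero _ fun φ hφ => ?_
    refine φ.apply_eq_zero_of_apply_tsum_pow_smul_eq_zero (fun n hn => (hx n hn).le)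
      (by norm_num) (hC.image hinj.injOn) (Set.image_subset_iff.2 fun k _ => hlam k) ?_ m hm
    rintro _ ⟨k, hk, rfl⟩
    rw [← hy k]
    exact hφ _ (Submodule.subset_span ⟨k, hk, rfl⟩)

/-- Klee: for norm-one vectors `x n`, `n ∈ B`, and distinct `λ k ∈ (0,1/2)`,
the vectors `y k = ∑_{n∈B} (λ k)^n • x n` satisfy: for every infinite `C ⊆ ℕ`, the closed
span of `{y k : k ∈ C}` equals the closed span of `{x n : n ∈ B}`. -/
theorem stmt2 {X : Type u} [NormedAddCommGroup X] [NormedSpace ℝ X] [CompleteSpace X]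
    (B : Set ℕ) (hB : B.Nonempty) (x : ℕ → X) (hx : ∀ n ∈ B, ‖x n‖ = 1)
    (lam : ℕ → ℝ) (hinj : Function.Injective lam)
    (hmem : ∀ k, lam k ∈ Set.Ioo (0 : ℝ) (1/2))
    (y : ℕ → X) (hy : ∀ k, y k = ∑' n : B, (lam k) ^ (n : ℕ) • x (n : ℕ))
    (C : Set ℕ) (hC : C.Infinite) :
    (Submodule.span ℝ (y '' C)).topologicalClosure
      = (Submodule.span ℝ (x '' B)).topologicalClosure :=
  stmt2_general B x hx lam hinj hmem y hy C hC
end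

section
/- Every infinite-dimensional separable Banach space admits an overcomplete set; moreover it admits an overcomplete set of cardinality continuum in which every infinite subset is linearly dense. -/
/-!
Take a dense sequence `(d m)` in `X`, put `aₙ₊₁ = d n / ‖d n‖`, and let `f t = ∑ tⁿ aₙ`, which is
real-analytic on `(-1, 1)`. If a functional `φ` is constant on `f(T)` for an infinite
`T ⊆ [0, 1/2]`, then `T` accumulates inside `(-1, 1)`, so by the identity theorem `φ ∘ f` is
constant; comparing power series, `φ` kills every `aₙ` with `n ≥ 1`, hence every `d m`, so
`φ = 0`. Thus each closed hyperplane meets `f` in finitely many parameters of `[0, 1/2]`. By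
Hahn–Banach every infinite subset of `f([0, 1/2])` is linearly dense, and since `f` is
finite-to-one there this image has the cardinality of the continuum; any countably infinite
subset of it is overcomplete.
-/

open Cardinal Set

universe u

theorem LinearMap.eqOn_zero_of_bddAbove {E : Type*} [AddCommGroup E] [Module ℝ E]
    (φ : E →ₗ[ℝ] ℝ) {M : Submodule ℝ E} (hφ : BddAbove (φ '' M)) : EqOn φ 0 M := by
  obtain ⟨c, hc⟩ := hφ
  intro y hy
  by_contra hne
  have hle := hc ⟨((c + 1) / φ y) • y, M.smul_mem _ hy, rfl⟩
  rw [map_smul, smul_eq_mul, div_mul_cancel₀ _ hne] at hle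
  linarith

theorem linearlyDense_of_forall_dual {X : Type u} [NormedAddCommGroup X] [NormedSpace ℝ X]
    {S : Set X} (h : ∀ φ : StrongDual ℝ X, (∀ z ∈ S, φ z = 0) → φ = 0) : LinearlyDense S := by
  set M := (Submodule.span ℝ S).topologicalClosure
  refine Submodule.eq_top_iff'.2 fun x ↦ by_contra fun hx ↦ ?_
  obtain ⟨φ, u, hφM, hux⟩ := geometric_hahn_banach_closed_point M.convex
    (Submodule.span ℝ S).isClosed_topologicalClosure hx
  have hφ : φ = 0 := h φ fun z hz ↦
    (φ : X →ₗ[ℝ] ℝ).eqOn_zero_of_bddAbove ⟨u, by rintro _ ⟨y, hy, rfl⟩; exact (hφM y hy).le⟩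
      ((Submodule.span ℝ S).le_topologicalClosure (Submodule.subset_span hz))
  have hu : 0 < u := by simpa using hφM 0 M.zero_mem
  simp only [hφ, zero_apply] at hux
  linarith

theorem AnalyticOnNhd.eqOn_of_preconnected_of_infinite_eq {𝕜 E : Type*}
    [NontriviallyNormedField 𝕜] [NormedAddCommGroup E] [NormedSpace 𝕜 E] {f g : 𝕜 → E}
    {U K T : Set 𝕜} (hf : AnalyticOnNhd 𝕜 f U) (hg : AnalyticOnNhd 𝕜 g U)
    (hU : IsPreconnected U) (hK : IsCompact K) (hKU : K ⊆ U) (hTK : T ⊆ K) (hT : T.Infinite)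
    (hfg : EqOn f g T) : EqOn f g U := by
  obtain ⟨z, hzK, hz⟩ := hT.exists_accPt_of_subset_isCompact hK hTK
  exact hf.eqOn_of_preconnected_of_frequently_eq hg hU (hKU hzK)
    ((accPt_iff_frequently_nhdsNE.1 hz).mono fun t ht ↦ hfg ht)

section SeriesOfCoeffs

variable {E : Type*} [NormedAddCommGroup E] [NormedSpace ℝ E] {a : ℕ → E}

def seriesOfCoeffs (a : ℕ → E) : FormalMultilinearSeries ℝ ℝ E :=
  fun n ↦ ContinuousMultilinearMap.mkPiRing ℝ (Fin n) (a n)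

theorem one_le_radius_seriesOfCoeffs {C : ℝ} (ha : ∀ n, ‖a n‖ ≤ C) :
    1 ≤ (seriesOfCoeffs a).radius := by
  simpa using (seriesOfCoeffs a).le_radius_of_bound C (r := 1) fun n ↦ by
    simpa [seriesOfCoeffs, ContinuousMultilinearMap.norm_mkPiRing] using ha n

theorem hasFPowerSeriesOnBall_sum_seriesOfCoeffs [CompleteSpace E] {C : ℝ}
    (ha : ∀ n, ‖a n‖ ≤ C) :
    HasFPowerSeriesOnBall (seriesOfCoeffs a).sum (seriesOfCoeffs a) 0 1 :=
  have h := one_le_radius_seriesOfCoeffs ha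
  ((seriesOfCoeffs a).hasFPowerSeriesOnBall (zero_lt_one.trans_le h)).mono zero_lt_one h

theorem apply_coeff_eq_zero_of_infinite_levelSet [CompleteSpace E] {C : ℝ}
    (ha : ∀ n, ‖a n‖ ≤ C) {K : Set ℝ} (hK : IsCompact K) (hK1 : K ⊆ Metric.ball 0 1)
    (φ : StrongDual ℝ E) (c : ℝ)
    (hT : {t ∈ K | φ ((seriesOfCoeffs a).sum t) = c}.Infinite) {n : ℕ} (hn : n ≠ 0) :
    φ (a n) = 0 := by
  have hball : Metric.eball (0 : ℝ) 1 = Metric.ball 0 1 := by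
    rw [← ENNReal.coe_one, Metric.eball_coe, NNReal.coe_one]
  have hφf := φ.comp_hasFPowerSeriesOnBall (hasFPowerSeriesOnBall_sum_seriesOfCoeffs ha)
  have hconst : EqOn (φ ∘ (seriesOfCoeffs a).sum) (fun _ ↦ c) (Metric.ball 0 1) :=
    AnalyticOnNhd.eqOn_of_preconnected_of_infinite_eq (hball ▸ hφf.analyticOnNhd)
      analyticOnNhd_const (convex_ball 0 1).isPreconnected hK hK1 (sep_subset _ _) hT
      fun t ht ↦ ht.2
  have hseries : φ.compFormalMultilinearSeries (seriesOfCoeffs a) =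
      constFormalMultilinearSeries ℝ ℝ c :=
    (hφf.hasFPowerSeriesAt.congr (hconst.eventuallyEq_of_mem
      (Metric.ball_mem_nhds 0 one_pos))).eq_formalMultilinearSeries hasFPowerSeriesAt_const
  simpa [FormalMultilinearSeries.coeff, constFormalMultilinearSeries_apply_of_nonzero hn,
    seriesOfCoeffs] using congrArg (fun p ↦ p.coeff n) hseries

end SeriesOfCoeffs

theorem Cardinal.lift_mk_image_eq_of_finite_fibers {α : Type u} {β : Type v} (f : α → β)
    {s : Set α} (hs : s.Infinite) (hf : ∀ y, {x ∈ s | f x = y}.Finite) :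
    lift.{u} #(f '' s) = lift.{v} #s := by
  refine le_antisymm mk_image_le_lift ?_
  have himage : (f '' s).Infinite := fun h ↦
    hs (h.of_finite_fibers f fun y _ ↦ (hf y).subset fun x hx ↦ ⟨hx.1, hx.2⟩)
  have := himage.to_subtype
  have hfiber (y : f '' s) : lift.{v} #(imageFactorization f s ⁻¹' {y}) ≤ ℵ₀ := by
    refine lift_le_aleph0.2 (mk_le_aleph0_iff.2 (Set.Finite.countable ?_).to_subtype)
    refine ((hf y).preimage Subtype.val_injective.injOn).subset fun x hx ↦ ⟨x.2, ?_⟩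
    simpa [imageFactorization, Subtype.ext_iff] using hx
  calc lift.{v} #s ≤ lift.{u} #(f '' s) * ℵ₀ :=
        lift_mk_le_lift_mk_mul_of_lift_mk_preimage_le _ hfiber
    _ = lift.{u} #(f '' s) := mul_aleph0_eq (by simp [aleph0_le_mk (f '' s)])

section HyperplaneSections

variable {X : Type u} [NormedAddCommGroup X] [NormedSpace ℝ X]

def MeetsHyperplanesFinitelyOn (f : ℝ → X) (K : Set ℝ) : Prop :=
  ∀ φ : StrongDual ℝ X, φ ≠ 0 → ∀ c : ℝ, {t ∈ K | φ (f t) = c}.Finite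

theorem exists_meetsHyperplanesFinitelyOn [CompleteSpace X]
    [TopologicalSpace.SeparableSpace X] :
    ∃ f : ℝ → X, MeetsHyperplanesFinitelyOn f (Icc 0 2⁻¹) := by
  obtain ⟨d, hd⟩ := TopologicalSpace.exists_dense_seq X
  set a : ℕ → X := fun n ↦ NormedSpace.normalize (d (n - 1))
  have ha : ∀ n, ‖a n‖ ≤ 1 := fun n ↦ by
    by_cases h : d (n - 1) = 0 <;> simp [a, h, NormedSpace.norm_normalize_eq_one_iff.2]
  have hK : Icc (0 : ℝ) 2⁻¹ ⊆ Metric.ball 0 1 := fun t ht ↦ by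
    rw [Real.ball_eq_Ioo]; constructor <;> linarith [ht.1, ht.2]
  refine ⟨(seriesOfCoeffs a).sum, fun φ hφ c ↦ not_infinite.1 fun hT ↦ hφ ?_⟩
  have hφd : ∀ m, φ (d m) = 0 := fun m ↦ by
    have h : φ (NormedSpace.normalize (d m)) = 0 :=
      apply_coeff_eq_zero_of_infinite_levelSet ha isCompact_Icc hK φ c hT m.succ_ne_zero
    rw [← NormedSpace.norm_smul_normalize (d m), map_smul, h, smul_zero]
  exact DFunLike.coe_injective
    (Continuous.ext_on hd φ.continuous continuous_zero (by rintro _ ⟨m, rfl⟩; exact hφd m))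

theorem MeetsHyperplanesFinitelyOn.linearlyDense {f : ℝ → X} {K : Set ℝ}
    (hf : MeetsHyperplanesFinitelyOn f K) {Z : Set X} (hZ : Z ⊆ f '' K) (hZinf : Z.Infinite) :
    LinearlyDense Z :=
  linearlyDense_of_forall_dual fun φ hφ ↦ by_contra fun hne ↦ hZinf <|
    ((hf φ hne 0).image f).subset fun z hz ↦ by
      obtain ⟨t, ht, rfl⟩ := hZ hz
      exact ⟨t, ⟨ht, hφ _ hz⟩, rfl⟩

theorem MeetsHyperplanesFinitelyOn.lift_mk_image [Nontrivial X] {f : ℝ → X} {K : Set ℝ}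
    (hf : MeetsHyperplanesFinitelyOn f K) (hK : K.Infinite) :
    lift.{0} #(f '' K) = lift.{u} #K := by
  obtain ⟨x, hx⟩ := exists_ne (0 : X)
  obtain ⟨φ, hφ⟩ := SeparatingDual.exists_ne_zero (R := ℝ) hx
  exact lift_mk_image_eq_of_finite_fibers f hK fun y ↦
    (hf φ (fun h ↦ hφ (by simp [h])) (φ y)).subset fun t ht ↦ ⟨ht.1, by rw [ht.2]⟩

end HyperplaneSections

theorem dens_eq_aleph0 {X : Type u} [TopologicalSpace X] [T1Space X]
    [TopologicalSpace.SeparableSpace X] [Infinite X] : dens X = ℵ₀ := by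
  have : Nonempty {s : Set X // Dense s} := ⟨⟨univ, dense_univ⟩⟩
  refine le_antisymm ?_ (le_ciInf fun ⟨s, hs⟩ ↦ ?_)
  · obtain ⟨s, hsc, hsd⟩ := TopologicalSpace.exists_countable_dense X
    exact (ciInf_le' _ ⟨s, hsd⟩).trans hsc.le_aleph0
  · have : s.Infinite := fun hfin ↦
      infinite_univ (by rwa [← hs.closure_eq, hfin.isClosed.closure_eq])
    have := this.to_subtype
    exact aleph0_le_mk s

theorem exists_overcomplete_of_forall_infinite_linearlyDense {X : Type u}
    [NormedAddCommGroup X] [NormedSpace ℝ X] (hX : dens X = ℵ₀) {Y : Set X} (hY : ℵ₀ ≤ #Y)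
    (hYZ : ∀ Z ⊆ Y, Z.Infinite → LinearlyDense Z) : ∃ Y : Set X, Overcomplete Y := by
  obtain ⟨Y₀, hY₀Y, hY₀⟩ := le_mk_iff_exists_subset.1 hY
  refine ⟨Y₀, hY₀.trans hX.symm, fun Z hZ hZY₀ ↦ hYZ Z (hZ.trans hY₀Y) ?_⟩
  rw [← infinite_coe_iff, infinite_iff, hZY₀, hY₀]

/-- every infinite-dimensional separable Banach space admits an overcomplete
set; moreover it admits a set of cardinality continuum all of whose infinite subsets are
linearly dense. -/
theorem stmt3 {X : Type u} [NormedAddCommGroup X] [NormedSpace ℝ X] [CompleteSpace X]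
    [TopologicalSpace.SeparableSpace X] (hX : ¬ FiniteDimensional ℝ X) :
    (∃ Y : Set X, Overcomplete Y) ∧
    (∃ Y : Set X, Cardinal.mk ↥Y = Cardinal.continuum ∧
      ∀ Z ⊆ Y, Z.Infinite → LinearlyDense Z) := by
  have : Nontrivial X := not_subsingleton_iff_nontrivial.1 fun _ ↦ hX inferInstance
  have : Infinite X := Module.Free.infinite ℝ X
  obtain ⟨f, hf⟩ := exists_meetsHyperplanesFinitelyOn (X := X)
  have hcard : #(f '' Icc 0 2⁻¹) = 𝔠 := by
    simpa [mk_Icc_real (show (0 : ℝ) < 2⁻¹ by norm_num)] using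
      hf.lift_mk_image (Icc_infinite (show (0 : ℝ) < 2⁻¹ by norm_num))
  have hdense : ∀ Z ⊆ f '' Icc 0 2⁻¹, Z.Infinite → LinearlyDense Z :=
    fun _ ↦ hf.linearlyDense
  exact ⟨exists_overcomplete_of_forall_infinite_linearlyDense dens_eq_aleph0
    (hcard ▸ aleph0_le_continuum) hdense, _, hcard, hdense⟩
end

section
/- There exists a sequence (e_α : α < ω₁) such that each e_α : α → ℕ is injective, and for all α₁, α₂ < ω₁ the set {β < min(α₁,α₂) : e_{α₁}(β) ≠ e_{α₂}(β)} is finite. -/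
/-!
The `e_α` are built by transfinite recursion, keeping every `e_α` injective with co-infinite
range and coherent with all earlier `e_β`. At a successor, the new point gets a fresh value. At a
countable limit `α`, fix a cofinal sequence `a₀ < a₁ < ⋯`. Changing `e_{a_{n+1}}` at finitely
many points (using fresh values) makes it extend the function already built below `a_n`; the union
of these functions is injective and coherent, and precomposing it with `a_k ↦ a_{2k}` frees the
values at the `a_{2k+1}`, so that the range becomes co-infinite again.
-/

open Cardinal Set Filter Function

section

variable {X Y : Type*}

theorem eventuallyEq_cofinite_inf_principal_iff {s : Set X} {f g : X → Y} :
    f =ᶠ[cofinite ⊓ 𝓟 s] g ↔ {x ∈ s | f x ≠ g x}.Finite := by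
  rw [EventuallyEq, eventually_inf_principal, eventually_cofinite]
  simp only [Classical.not_imp]

theorem eventuallyEq_cofinite_inf_principal_of_eqOn_diff {s c : Set X} {f g : X → Y}
    (hc : c.Finite) (h : EqOn f g (s \ c)) : f =ᶠ[cofinite ⊓ 𝓟 s] g :=
  eventuallyEq_cofinite_inf_principal_iff.2 <|
    hc.subset fun _ ⟨hxs, hne⟩ => by_contra fun hxc => hne (h ⟨hxs, hxc⟩)

theorem exists_injOn_eqOn_diff_of_finite {s c : Set X} {f : X → Y} (hc : c.Finite)
    (hf : InjOn f (s \ c)) (hfree : (f '' (s \ c))ᶜ.Infinite) :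
    ∃ f', InjOn f' s ∧ EqOn f' f (s \ c) := by
  classical
  have : Nonempty Y := hfree.nonempty.to_type
  obtain ⟨h, hmaps, hinj⟩ := hc.exists_injOn_of_encard_le (t := (f '' (s \ c))ᶜ)
    (by rw [hfree.encard_eq]; exact le_top)
  refine ⟨c.piecewise h f, ?_, piecewise_eqOn_compl _ _ _ |>.mono fun x hx => hx.2⟩
  refine ((injOn_union disjoint_sdiff_inter.symm).2 ⟨?_, ?_, ?_⟩).mono
    (inter_union_sdiff s c).superset
  · exact (hinj.mono inter_subset_right).congr
      ((piecewise_eqOn c h f).symm.mono inter_subset_right)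
  · exact hf.congr ((piecewise_eqOn_compl c h f).symm.mono fun x hx => hx.2)
  · rintro x ⟨-, hxc⟩ y hy hxy
    rw [piecewise_eq_of_mem _ _ _ hxc, piecewise_eq_of_notMem _ _ _ hy.2] at hxy
    exact hmaps hxc ⟨y, hy, hxy.symm⟩

theorem injOn_piecewise_diff {s t : Set X} [DecidablePred (· ∈ s)] (hst : s ⊆ t) {e g : X → Y}
    (he : InjOn e t) (hg : InjOn g s) :
    InjOn (s.piecewise g e) (t \ {x ∈ t \ s | e x ∈ g '' {y ∈ s | g y ≠ e y}}) := by
  refine ((injOn_union (disjoint_sdiff_right (s := s))).2 ⟨?_, ?_, ?_⟩).mono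
    (subset_union_right.trans union_sdiff_self.symm.subset)
  · exact hg.congr fun x hx => (piecewise_eq_of_mem _ _ _ hx).symm
  · exact (he.mono fun x hx => hx.1.1).congr fun x hx => (piecewise_eq_of_notMem _ _ _ hx.2).symm
  · rintro x hxs y ⟨⟨hyt, hyC⟩, hys⟩ hxy
    rw [piecewise_eq_of_mem _ _ _ hxs, piecewise_eq_of_notMem _ _ _ hys] at hxy
    by_cases hxD : g x = e x
    · rw [hxD] at hxy
      exact hys (he (hst hxs) hyt hxy ▸ hxs)
    · exact hyC ⟨⟨hyt, hys⟩, x, ⟨hxs, hxD⟩, hxy⟩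

theorem exists_injOn_extension {s t : Set X} (hst : s ⊆ t) {e g : X → Y} (he : InjOn e t)
    (hfree : (e '' t)ᶜ.Infinite) (hg : InjOn g s) (hge : g =ᶠ[cofinite ⊓ 𝓟 s] e) :
    ∃ g', EqOn g' g s ∧ InjOn g' t ∧ g' =ᶠ[cofinite ⊓ 𝓟 t] e := by
  classical
  set D := {x ∈ s | g x ≠ e x}
  have hD : D.Finite := eventuallyEq_cofinite_inf_principal_iff.1 hge
  have hgD : ∀ x ∈ s, x ∉ D → g x = e x := fun x hx hxD => by_contra fun hne => hxD ⟨hx, hne⟩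
  have hf_in : ∀ x ∈ s, s.piecewise g e x = g x := fun x hx => piecewise_eq_of_mem _ _ _ hx
  have hf_out : ∀ x ∉ s, s.piecewise g e x = e x := fun x hx => piecewise_eq_of_notMem _ _ _ hx
  set C := {x ∈ t \ s | e x ∈ g '' D}
  have hC : C.Finite :=
    (hD.image g).of_injOn (fun x hx => hx.2) (he.mono fun x hx => hx.1.1)
  have hf_free : (s.piecewise g e '' (t \ C))ᶜ.Infinite := by
    refine (hfree.sdiff (hD.image g)).mono ?_
    rintro _ ⟨hfree, hgD'⟩ ⟨x, ⟨hxt, -⟩, rfl⟩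
    by_cases hxs : x ∈ s
    · rw [hf_in x hxs] at hfree hgD'
      by_cases hxD : x ∈ D
      · exact hgD' ⟨x, hxD, rfl⟩
      · exact hfree ⟨x, hxt, (hgD x hxs hxD).symm⟩
    · exact hfree ⟨x, hxt, (hf_out x hxs).symm⟩
  obtain ⟨g', hg'_inj, hg'f⟩ :=
    exists_injOn_eqOn_diff_of_finite hC (injOn_piecewise_diff hst he hg) hf_free
  refine ⟨g', fun x hxs => (hg'f ⟨hst hxs, fun hxC => hxC.1.2 hxs⟩).trans (hf_in x hxs), hg'_inj,
    eventuallyEq_cofinite_inf_principal_of_eqOn_diff (hC.union hD) ?_⟩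
  rintro x ⟨hxt, hx⟩
  rw [hg'f ⟨hxt, hx ∘ Or.inl⟩]
  by_cases hxs : x ∈ s
  · rw [hf_in x hxs]
    exact hgD x hxs (hx ∘ Or.inr)
  · exact hf_out x hxs

theorem injective_extend_two_mul {a : ℕ → X} (ha : Injective a) :
    Injective (extend a (fun k => a (2 * k)) id) := by
  intro x y hxy
  by_cases hx : x ∈ range a <;> by_cases hy : y ∈ range a
  · obtain ⟨⟨i, rfl⟩, ⟨j, rfl⟩⟩ := And.intro hx hy
    rw [ha.extend_apply, ha.extend_apply] at hxy
    rw [show i = j by have := ha hxy; omega]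
  · obtain ⟨i, rfl⟩ := hx
    rw [ha.extend_apply, extend_apply' _ _ _ hy] at hxy
    exact absurd ⟨2 * i, hxy⟩ hy
  · obtain ⟨j, rfl⟩ := hy
    rw [ha.extend_apply, extend_apply' _ _ _ hx] at hxy
    exact absurd ⟨2 * j, hxy.symm⟩ hx
  · rwa [extend_apply' _ _ _ hx, extend_apply' _ _ _ hy] at hxy

theorem exists_injOn_compl_image_infinite {s : Set X} {f : X → Y} (hf : InjOn f s)
    {a : ℕ → X} (ha : Injective a) (has : ∀ n, a n ∈ s) :
    ∃ f', InjOn f' s ∧ (f' '' s)ᶜ.Infinite ∧ EqOn f' f (range a)ᶜ := by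
  -- precomposing with `σ`, which sends `a k` to `a (2 * k)`, frees the values `f (a (2 * k + 1))`
  set σ := extend a (fun k => a (2 * k)) id
  have hσa : ∀ k, σ (a k) = a (2 * k) := ha.extend_apply _ _
  have hσ : ∀ x ∉ range a, σ x = x := fun x hx => extend_apply' _ _ _ hx
  have hσ_odd : ∀ k x, σ x ≠ a (2 * k + 1) := by
    intro k x hx
    by_cases hxa : x ∈ range a
    · obtain ⟨i, rfl⟩ := hxa
      rw [hσa] at hx
      have := ha hx
      omega
    · exact hxa ⟨2 * k + 1, by rw [← hσ x hxa, hx]⟩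
  have hσ_maps : MapsTo σ s s := fun x hx => by
    by_cases hxa : x ∈ range a
    · obtain ⟨i, rfl⟩ := hxa
      rw [hσa]
      exact has _
    · rwa [hσ x hxa]
  refine ⟨f ∘ σ, hf.comp (injective_extend_two_mul ha).injOn hσ_maps, ?_,
    fun x hx => congrArg f (hσ x hx)⟩
  refine infinite_of_injective_forall_mem (f := fun k => f (a (2 * k + 1))) ?_ ?_
  · intro i j hij
    have := ha (hf (has _) (has _) hij)
    omega
  · rintro k ⟨x, hx, hfx⟩
    exact hσ_odd k x (hf (hσ_maps hx) (has _) hfx)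

theorem exists_eqOn_of_eqOn_succ {S : ℕ → Set X} (hS : Monotone S) {G : ℕ → X → Y}
    (hG : ∀ n, EqOn (G (n + 1)) (G n) (S n)) : ∃ g, ∀ n, EqOn g (G n) (S n) := by
  classical
  have hle : ∀ n m, n ≤ m → EqOn (G m) (G n) (S n) := by
    intro n m hnm
    induction m, hnm using Nat.le_induction with
    | base => exact eqOn_refl _ _
    | succ m hnm ih => exact ((hG m).mono (hS hnm)).trans ih
  refine ⟨fun x => if h : ∃ n, x ∈ S n then G h.choose x else G 0 x, fun n x hx => ?_⟩
  have h : ∃ n, x ∈ S n := ⟨n, hx⟩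
  simp only [dif_pos h]
  rcases le_total h.choose n with hk | hk
  · exact (hle _ n hk h.choose_spec).symm
  · exact hle n _ hk hx

end

theorem exists_seq_of_forall_exists_succ {α : Type*} {P : ℕ → α → Prop} {R : ℕ → α → α → Prop}
    (h₀ : ∃ x, P 0 x) (h : ∀ n x, P n x → ∃ y, P (n + 1) y ∧ R n x y) :
    ∃ f : ℕ → α, ∀ n, P n (f n) ∧ R n (f n) (f (n + 1)) := by
  obtain ⟨x₀, hx₀⟩ := h₀
  choose! next hnextP hnextR using h
  let f : ℕ → α := fun n => Nat.rec x₀ next n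
  have hf : ∀ n, P n (f n) := fun n => Nat.rec hx₀ (fun n ih => hnextP n _ ih) n
  exact ⟨f, fun n => ⟨hf n, hnextR n _ (hf n)⟩⟩

theorem exists_strictMono_tendsto_atTop (β : Type*) [LinearOrder β] [Countable β] [Nonempty β]
    [NoMaxOrder β] : ∃ u : ℕ → β, StrictMono u ∧ Tendsto u atTop atTop := by
  obtain ⟨xs, -, hxs⟩ := exists_seq_monotone_tendsto_atTop_atTop β
  obtain ⟨φ, hφ, hxsφ⟩ := strictMono_subseq_of_tendsto_atTop hxs
  exact ⟨xs ∘ φ, hxsφ, hxs.comp hφ.tendsto_atTop⟩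

namespace Ordinal

universe u

theorem exists_strictMono_cofinal_of_isSuccLimit {α : Ordinal.{u}} (hα : α < (aleph 1).ord)
    (hlim : Order.IsSuccLimit α) :
    ∃ a : ℕ → Ordinal.{u}, StrictMono a ∧ (∀ n, a n < α) ∧ ∀ β < α, ∃ n, β < a n := by
  have : Countable (Iio α) := by
    rw [← mk_le_aleph0_iff, Cardinal.mk_Iio_ordinal, lift_le_aleph0, ← lt_aleph_one_iff]
    exact lt_ord.1 hα
  have : Nonempty (Iio α) := ⟨⟨0, hlim.bot_lt⟩⟩
  have : NoMaxOrder (Iio α) :=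
    ⟨fun x => ⟨⟨Order.succ x, hlim.succ_lt x.2⟩, Order.lt_succ (x : Ordinal)⟩⟩
  obtain ⟨u, hu_mono, hu⟩ := exists_strictMono_tendsto_atTop (Iio α)
  refine ⟨fun n => u n, hu_mono, fun n => (u n).2, fun β hβ => ?_⟩
  exact (hu.eventually_gt_atTop ⟨β, hβ⟩).exists

-- `e_α` is modelled by a total function on ordinals whose values at `β ≥ α` are ignored.
def Admissible (e : Ordinal.{u} → Ordinal.{u} → ℕ) (α : Ordinal.{u}) (f : Ordinal.{u} → ℕ) :
    Prop :=
  InjOn f (Iio α) ∧ (f '' Iio α)ᶜ.Infinite ∧ ∀ β < α, f =ᶠ[cofinite ⊓ 𝓟 (Iio β)] e β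

theorem admissible_congr {e e' : Ordinal.{u} → Ordinal.{u} → ℕ} {α : Ordinal.{u}}
    (h : ∀ β < α, e β = e' β) : Admissible e α = Admissible e' α := by
  funext f
  exact propext (and_congr_right' (and_congr_right' (forall₂_congr fun β hβ => by rw [h β hβ])))

-- Only `α < ω₁` is shown to admit an admissible choice; beyond that the values are junk.
noncomputable def coherentSeq : Ordinal.{u} → Ordinal.{u} → ℕ :=
  lt_wf.fix fun α e => Classical.epsilon (Admissible (fun β => if h : β < α then e β h else 0) α)

theorem admissible_coherentSeq_of_exists {α : Ordinal.{u}} (h : ∃ f, Admissible coherentSeq α f) :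
    Admissible coherentSeq α (coherentSeq α) := by
  have heq : coherentSeq α = Classical.epsilon (Admissible coherentSeq α) := by
    rw [coherentSeq, lt_wf.fix_eq]
    exact congrArg _ (admissible_congr fun β hβ => dif_pos hβ)
  exact heq ▸ Classical.epsilon_spec h

variable {e : Ordinal.{u} → Ordinal.{u} → ℕ}

theorem Admissible.eventuallyEq_of_le {γ : Ordinal.{u}} (hγ : Admissible e γ (e γ))
    {f : Ordinal.{u} → ℕ} (hf : f =ᶠ[cofinite ⊓ 𝓟 (Iio γ)] e γ) {β : Ordinal.{u}} (hβ : β ≤ γ) :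
    f =ᶠ[cofinite ⊓ 𝓟 (Iio β)] e β := by
  rcases hβ.lt_or_eq with hβ | rfl
  · exact (hf.filter_mono (inf_le_inf_left _ (principal_mono.2 (Iio_subset_Iio hβ.le)))).trans
      (hγ.2.2 β hβ)
  · exact hf

theorem Admissible.exists_succ {β : Ordinal.{u}} (h : Admissible e β (e β)) :
    ∃ f, Admissible e (Order.succ β) f := by
  obtain ⟨m, hm⟩ := h.2.1.nonempty
  set f := update (e β) β m
  have hfe : EqOn f (e β) (Iio β) := fun x hx => update_of_ne hx.ne _ _
  have himage : f '' Iio β = e β '' Iio β := hfe.image_eq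
  have hfβ : f β = m := update_self _ _ _
  refine ⟨f, ?_, ?_, fun δ hδ => h.eventuallyEq_of_le ?_ (Order.lt_succ_iff.1 hδ)⟩
  · rw [Order.Iio_succ_eq_insert, injOn_insert self_notMem_Iio]
    refine ⟨h.1.congr hfe.symm, ?_⟩
    rwa [himage, hfβ]
  · rw [Order.Iio_succ_eq_insert, image_insert_eq, himage, hfβ]
    refine (h.2.1.sdiff (finite_singleton m)).mono ?_
    rintro y ⟨hy, hym⟩ (rfl | hy')
    exacts [hym rfl, hy hy']
  · exact hfe.eventuallyEq.filter_mono inf_le_right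

theorem exists_admissible_of_cofinal {α : Ordinal.{u}} {a : ℕ → Ordinal.{u}} (ha : StrictMono a)
    (ha_lt : ∀ n, a n < α) (ha_cof : ∀ β < α, ∃ n, β < a n)
    (hadm : ∀ n, Admissible e (a n) (e (a n))) : ∃ f, Admissible e α f := by
  obtain ⟨G, hG⟩ := exists_seq_of_forall_exists_succ
    (P := fun n g => InjOn g (Iio (a n)) ∧ g =ᶠ[cofinite ⊓ 𝓟 (Iio (a n))] e (a n))
    (R := fun n g g' => EqOn g' g (Iio (a n)))
    ⟨e (a 0), (hadm 0).1, EventuallyEq.rfl⟩ fun n g ⟨hg, hge⟩ => by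
      have hlt := ha n.lt_succ_self
      obtain ⟨g', hg'g, hg'_inj, hg'e⟩ := exists_injOn_extension (Iio_subset_Iio hlt.le)
        (hadm (n + 1)).1 (hadm (n + 1)).2.1 hg (hge.trans ((hadm (n + 1)).2.2 _ hlt).symm)
      exact ⟨g', ⟨hg'_inj, hg'e⟩, hg'g⟩
  obtain ⟨g, hg⟩ := exists_eqOn_of_eqOn_succ
    (fun m n hmn => Iio_subset_Iio (ha.monotone hmn)) fun n => (hG n).2
  have hg_inj : InjOn g (Iio α) := by
    intro x hx y hy hxy
    obtain ⟨m, hm⟩ := ha_cof x hx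
    obtain ⟨n, hn⟩ := ha_cof y hy
    have hx' : x ∈ Iio (a (max m n)) := hm.trans_le (ha.monotone (le_max_left m n))
    have hy' : y ∈ Iio (a (max m n)) := hn.trans_le (ha.monotone (le_max_right m n))
    exact (hG _).1.1 hx' hy' (by rwa [← hg _ hx', ← hg _ hy'])
  obtain ⟨f, hf_inj, hf_free, hfg⟩ := exists_injOn_compl_image_infinite hg_inj ha.injective ha_lt
  refine ⟨f, hf_inj, hf_free, fun β hβ => ?_⟩
  obtain ⟨n, hn⟩ := ha_cof β hβ
  have hfg_n : f =ᶠ[cofinite ⊓ 𝓟 (Iio (a n))] g :=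
    eventuallyEq_cofinite_inf_principal_of_eqOn_diff ((finite_Iio n).image a)
      fun x ⟨hx, hxa⟩ => hfg fun ⟨k, hk⟩ => hxa ⟨k, ha.lt_iff_lt.1 (hk ▸ hx), hk⟩
  have hg_n : g =ᶠ[cofinite ⊓ 𝓟 (Iio (a n))] e (a n) :=
    ((hg n).eventuallyEq.filter_mono inf_le_right).trans (hG n).1.2
  exact (hadm n).eventuallyEq_of_le (hfg_n.trans hg_n) hn.le

theorem admissible_coherentSeq {α : Ordinal.{u}} (hα : α < (aleph 1).ord) :
    Admissible coherentSeq α (coherentSeq α) := by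
  induction α using WellFoundedLT.induction with | _ α IH => ?_
  apply admissible_coherentSeq_of_exists
  rcases zero_or_succ_or_isSuccLimit α with rfl | ⟨β, rfl⟩ | hlim
  · exact ⟨fun _ => 0, by simp [Admissible, infinite_univ]⟩
  · exact (IH β (Order.lt_succ β) ((Order.lt_succ β).trans hα)).exists_succ
  · obtain ⟨a, ha, ha_lt, ha_cof⟩ := exists_strictMono_cofinal_of_isSuccLimit hα hlim
    exact exists_admissible_of_cofinal ha ha_lt ha_cof
      fun n => IH _ (ha_lt n) ((ha_lt n).trans hα)

theorem coherentSeq_eventuallyEq {α₁ α₂ : Ordinal.{u}} (h₁ : α₁ < (aleph 1).ord)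
    (h₂ : α₂ < (aleph 1).ord) :
    coherentSeq α₁ =ᶠ[cofinite ⊓ 𝓟 (Iio (min α₁ α₂))] coherentSeq α₂ := by
  wlog h : α₁ ≤ α₂ generalizing α₁ α₂
  · rw [min_comm]
    exact (this h₂ h₁ (le_of_not_ge h)).symm
  rw [min_eq_left h]
  exact ((admissible_coherentSeq h₂).eventuallyEq_of_le EventuallyEq.rfl h).symm

end Ordinal

/-- there is a coherent sequence `(e_α : α < ω₁)` of injections
`e_α : α → ℕ`: any two of them differ at only finitely many common arguments. -/
theorem stmt4 :
    ∃ e : (α : Ordinal.{0}) → {β : Ordinal.{0} // β < α} → ℕ,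
      (∀ α, α < (Cardinal.aleph 1).ord → Function.Injective (e α)) ∧
      ∀ α₁ α₂ : Ordinal.{0}, α₁ < (Cardinal.aleph 1).ord → α₂ < (Cardinal.aleph 1).ord →
        {β : Ordinal.{0} | ∃ h₁ : β < α₁, ∃ h₂ : β < α₂,
          e α₁ ⟨β, h₁⟩ ≠ e α₂ ⟨β, h₂⟩}.Finite := by
  refine ⟨fun α β => Ordinal.coherentSeq α β,
    fun α hα x y hxy => Subtype.ext ((Ordinal.admissible_coherentSeq hα).1 x.2 y.2 hxy),
    fun α₁ α₂ h₁ h₂ => ?_⟩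
  convert eventuallyEq_cofinite_inf_principal_iff.1 (Ordinal.coherentSeq_eventuallyEq h₁ h₂)
    using 1
  ext β
  simp only [mem_ofPred_eq, mem_Iio, lt_min_iff, exists_prop, and_assoc]
end

section
/- Let (e_α : α < ω₁) be a coherent sequence of injections e_α : α → ℕ (meaning each e_α is injective and any two e_{α₁}, e_{α₂} differ at only finitely many common arguments). Then for every uncountable A ⊆ ω₁ and every γ < ω₁ there is an uncountable A' ⊆ A \ (γ+1) such that e_{α₁} and e_{α₂} agree on all ordinals ≤ γ for every α₁, α₂ ∈ A'. -/
open Cardinal Set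

/-!
Restrict every `e α` with `γ < α` to the countable set `Iic γ`. By coherence with `e (γ + 1)`,
each restriction differs from that of `e (γ + 1)` at only finitely many points, and there are
only countably many such functions `Iic γ → ℕ`. Hence one of them is the restriction of `e α`
for uncountably many `α ∈ A`.
-/

lemma Set.countable_setOf_finite_ne {ι β : Type*} [Countable ι] [Countable β] (g : ι → β) :
    {f : ι → β | {i | f i ≠ g i}.Finite}.Countable := by
  classical
  let patch : (Σ t : Finset ι, t → β) → ι → β := fun p i =>
    if h : i ∈ p.1 then p.2 ⟨i, h⟩ else g i
  refine (countable_range patch).mono fun f (hf : {i | f i ≠ g i}.Finite) =>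
    mem_range.2 ⟨⟨hf.toFinset, fun i => f i⟩, funext fun i => ?_⟩
  by_cases h : f i = g i <;> simp [patch, h]

lemma Set.exists_not_countable_inter_preimage_singleton {α β : Type*} {A : Set α} {T : Set β}
    {g : α → β} (hT : T.Countable) (hg : MapsTo g A T) (hA : ¬A.Countable) :
    ∃ b ∈ T, ¬(A ∩ g ⁻¹' {b}).Countable := by
  by_contra! h
  exact hA <| (hT.biUnion h).mono fun a ha =>
    mem_biUnion (hg ha) (⟨ha, rfl⟩ : a ∈ A ∩ g ⁻¹' {g a})

lemma Ordinal.countable_Iic_of_lt_ord_aleph_one {γ : Ordinal.{0}} (hγ : γ < (aleph 1).ord) :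
    (Iic γ).Countable := by
  rw [← Order.Iio_succ, ← le_aleph0_iff_set_countable, Cardinal.mk_Iio_ordinal, lift_le_aleph0,
    ← lt_aleph_one_iff, ← lt_ord]
  exact (isSuccLimit_ord (aleph0_le_aleph 1)).succ_lt hγ

section Truncation

variable {O : Type*} [LinearOrder O] (e : (α : O) → {β : O // β < α} → ℕ)

def truncateIic (γ α : O) (i : Iic γ) : ℕ :=
  if h : (i : O) < α then e α ⟨i, h⟩ else 0

variable {e}

lemma truncateIic_of_lt {γ α : O} (hγα : γ < α) (i : Iic γ) :
    truncateIic e γ α i = e α ⟨i, lt_of_le_of_lt i.2 hγα⟩ :=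
  dif_pos _

lemma finite_truncateIic_ne {γ α₁ α₂ : O} (hα₁ : γ < α₁) (hα₂ : γ < α₂)
    (hcoh : {β : O | ∃ h₁ : β < α₁, ∃ h₂ : β < α₂, e α₁ ⟨β, h₁⟩ ≠ e α₂ ⟨β, h₂⟩}.Finite) :
    {i : Iic γ | truncateIic e γ α₁ i ≠ truncateIic e γ α₂ i}.Finite := by
  refine (hcoh.preimage Subtype.val_injective.injOn).subset fun i hi => ?_
  rw [mem_ofPred_eq, truncateIic_of_lt hα₁, truncateIic_of_lt hα₂] at hi
  exact ⟨_, _, hi⟩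

end Truncation

theorem stmt5_general (e : (α : Ordinal.{0}) → {β : Ordinal.{0} // β < α} → ℕ)
    (hcoh : ∀ α₁ α₂ : Ordinal.{0}, α₁ < (Cardinal.aleph 1).ord →
      α₂ < (Cardinal.aleph 1).ord →
      {β : Ordinal.{0} | ∃ h₁ : β < α₁, ∃ h₂ : β < α₂,
        e α₁ ⟨β, h₁⟩ ≠ e α₂ ⟨β, h₂⟩}.Finite)
    (A : Set Ordinal.{0}) (hA : A ⊆ Set.Iio (Cardinal.aleph 1).ord)
    (hAunc : ¬ A.Countable) (γ : Ordinal.{0}) (hγ : γ < (Cardinal.aleph 1).ord) :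
    ∃ A' ⊆ A, ¬ A'.Countable ∧ (∀ α ∈ A', γ < α) ∧
      ∀ α₁ ∈ A', ∀ α₂ ∈ A', ∀ β ≤ γ, ∀ h₁ : β < α₁, ∀ h₂ : β < α₂,
        e α₁ ⟨β, h₁⟩ = e α₂ ⟨β, h₂⟩ := by
  have hIic := Ordinal.countable_Iic_of_lt_ord_aleph_one hγ
  have hγ₁ : γ + 1 < (aleph 1).ord := (isSuccLimit_ord (aleph0_le_aleph 1)).succ_lt hγ
  have hAγ : ¬(A \ Iic γ).Countable := fun h => hAunc (h.of_sdiff hIic)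
  have : Countable (Iic γ) := hIic.to_subtype
  have hmaps : MapsTo (truncateIic e γ) (A \ Iic γ)
      {f | {i | f i ≠ truncateIic e γ (γ + 1) i}.Finite} := fun α hα =>
    finite_truncateIic_ne (not_le.1 hα.2) (Order.lt_add_one_iff.2 le_rfl)
      (hcoh α _ (hA hα.1) hγ₁)
  obtain ⟨f, -, hf⟩ := exists_not_countable_inter_preimage_singleton
    (countable_setOf_finite_ne _) hmaps hAγ
  refine ⟨_, fun α hα => hα.1.1, hf, fun α hα => not_le.1 hα.1.2, ?_⟩
  rintro α₁ ⟨⟨-, hα₁⟩, hf₁⟩ α₂ ⟨⟨-, hα₂⟩, hf₂⟩ β hβ h₁ h₂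
  have := congrFun (hf₁.trans hf₂.symm) ⟨β, hβ⟩
  rwa [truncateIic_of_lt (not_le.1 hα₁), truncateIic_of_lt (not_le.1 hα₂)] at this

/-- given a coherent sequence of injections `e_α : α → ℕ` (`α < ω₁`),
every uncountable `A ⊆ ω₁` and `γ < ω₁` admit an uncountable `A' ⊆ A` of ordinals
above `γ` on which all `e_α` agree on arguments `≤ γ`. -/
theorem stmt5 (e : (α : Ordinal.{0}) → {β : Ordinal.{0} // β < α} → ℕ)
    (hinj : ∀ α, α < (Cardinal.aleph 1).ord → Function.Injective (e α))
    (hcoh : ∀ α₁ α₂ : Ordinal.{0}, α₁ < (Cardinal.aleph 1).ord →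
      α₂ < (Cardinal.aleph 1).ord →
      {β : Ordinal.{0} | ∃ h₁ : β < α₁, ∃ h₂ : β < α₂,
        e α₁ ⟨β, h₁⟩ ≠ e α₂ ⟨β, h₂⟩}.Finite)
    (A : Set Ordinal.{0}) (hA : A ⊆ Set.Iio (Cardinal.aleph 1).ord)
    (hAunc : ¬ A.Countable) (γ : Ordinal.{0}) (hγ : γ < (Cardinal.aleph 1).ord) :
    ∃ A' ⊆ A, ¬ A'.Countable ∧ (∀ α ∈ A', γ < α) ∧
      ∀ α₁ ∈ A', ∀ α₂ ∈ A', ∀ β ≤ γ, ∀ h₁ : β < α₁, ∀ h₂ : β < α₂,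
        e α₁ ⟨β, h₁⟩ = e α₂ ⟨β, h₂⟩ :=
  stmt5_general e hcoh A hA hAunc γ hγ
end

section
/- Let κ be an infinite cardinal, X a Banach space, and x* a norm-one functional on X. Then the character of x* in the dual ball B_{X*} with the weak* topology is at most κ if and only if there is a closed subspace Y of X of density at most κ such that x* is the unique norm-one functional on X extending x*|Y. -/
open Cardinal Set

universe u

/-- The character of the point `x` relative to the subspace `A ⊆ T` (with the subspace
topology): the least cardinality of a family `B` of open neighbourhoods of `x` such that
every open neighbourhood of `x` contains some `V ∩ A` with `V ∈ B`. -/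
noncomputable def relChar {T : Type u} [TopologicalSpace T] (A : Set T) (x : T) : Cardinal.{u} :=
  sInf {c | ∃ B : Set (Set T), Cardinal.mk ↥B = c ∧ (∀ V ∈ B, x ∈ V ∧ IsOpen V) ∧
    ∀ U : Set T, IsOpen U → x ∈ U → ∃ V ∈ B, V ∩ A ⊆ U}

/-- The closed unit ball of the dual of `X`, as a subset of the weak* dual. -/
def dualBall (X : Type u) [NormedAddCommGroup X] [NormedSpace ℝ X] : Set (WeakDual ℝ X) :=
  {φ | ‖WeakDual.toStrongDual φ‖ ≤ 1}

/-!
A weak* open neighbourhood of `x*` contains a set `{φ | φ = x* on F}` with `F` finite, so a relative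
neighbourhood base of `κ` sets involves only `κ` points of `X`; their closed span `Y` has density
`≤ κ`, and a norm-one `φ` agreeing with `x*` on `Y` lies in every member of the base, hence is `x*`.

Conversely, take `D` dense in `Y` with `|D| ≤ κ`. The conditions `|φ d - x* d| ≤ 1/(n+1)`, `d ∈ D`,
cut `x*` out of the weak* compact ball, because a functional of norm `≤ 1` agreeing with `x*` on `Y`
equals `x*` (otherwise the ray from `x*` through it would meet the unit sphere at a second norm-one
extension). By compactness, finitely many strict conditions already force a point of the ball into
any given neighbourhood of `x*`, giving a base indexed by `Finset (D × ℕ)`.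
-/

open Filter TopologicalSpace

section RelativeCharacter

variable {T : Type u} [TopologicalSpace T]

def IsRelNhdsBase (A : Set T) (x : T) (B : Set (Set T)) : Prop :=
  (∀ V ∈ B, x ∈ V ∧ IsOpen V) ∧ ∀ U : Set T, IsOpen U → x ∈ U → ∃ V ∈ B, V ∩ A ⊆ U

theorem relChar_le_mk {A : Set T} {x : T} {B : Set (Set T)} (hB : IsRelNhdsBase A x B) :
    relChar A x ≤ #B :=
  csInf_le' ⟨B, rfl, hB⟩

theorem exists_isRelNhdsBase_mk_eq_relChar (A : Set T) (x : T) :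
    ∃ B : Set (Set T), IsRelNhdsBase A x B ∧ #B = relChar A x := by
  obtain ⟨B, hB, hBA⟩ := csInf_mem (s := {c | ∃ B : Set (Set T), #B = c ∧ IsRelNhdsBase A x B})
    ⟨_, {V | x ∈ V ∧ IsOpen V}, rfl, fun V hV => hV, fun U hU hxU =>
      ⟨U, ⟨hxU, hU⟩, inter_subset_left⟩⟩
  exact ⟨B, hBA, hB⟩

theorem IsRelNhdsBase.sInter_inter_subset [T1Space T] {A : Set T} {x : T} {B : Set (Set T)}
    (hB : IsRelNhdsBase A x B) : ⋂₀ B ∩ A ⊆ {x} := by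
  rintro y ⟨hyB, hyA⟩
  by_contra hyx
  obtain ⟨V, hV, hVy⟩ := hB.2 {y}ᶜ isOpen_compl_singleton (Ne.symm hyx)
  exact hVy ⟨hyB V hV, hyA⟩ rfl

theorem relChar_le_mk_finset_of_isCompact {A : Set T} (hA : IsCompact A) {x : T} {ι : Type u}
    (W : ι → Set T) (hW : ∀ i, IsOpen (W i)) (hxW : ∀ i, x ∈ W i)
    (hAW : A ∩ ⋂ i, closure (W i) ⊆ {x}) : relChar A x ≤ #(Finset ι) := by
  refine (relChar_le_mk (B := range fun t : Finset ι => ⋂ i ∈ t, W i) ⟨?_, ?_⟩).trans mk_range_le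
  · rintro _ ⟨t, rfl⟩
    exact ⟨mem_iInter₂.2 fun i _ => hxW i, isOpen_biInter_finset fun i _ => hW i⟩
  · intro U hU hxU
    obtain ⟨t, ht⟩ := (hA.diff hU).elim_finite_subfamily_closed (fun i => closure (W i))
      (fun _ => isClosed_closure) (by
        refine eq_empty_of_forall_notMem fun y ⟨⟨hyA, hyU⟩, hyW⟩ => hyU ?_
        rw [hAW ⟨hyA, hyW⟩]
        exact hxU)
    refine ⟨_, ⟨t, rfl⟩, fun y ⟨hyW, hyA⟩ => ?_⟩
    by_contra hyU
    exact ht.subset ⟨⟨hyA, hyU⟩, mem_iInter₂.2 fun i hi => subset_closure (mem_iInter₂.1 hyW i hi)⟩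

end RelativeCharacter

theorem Cardinal.mk_finset_le_max (α : Type u) : #(Finset α) ≤ max ℵ₀ #α := by
  classical
  exact (mk_le_of_surjective List.toFinset_surjective).trans (mk_list_le_max α)

section Density

variable {E : Type u} [TopologicalSpace E]

theorem dens_le_of_subset_closure {Y D : Set E} (hDY : D ⊆ Y) (hYD : Y ⊆ closure D) :
    dens Y ≤ #D := by
  have hdense : Dense (Subtype.val ⁻¹' D : Set Y) := by
    intro y
    rw [closure_subtype, Subtype.image_preimage_coe, inter_eq_right.2 hDY]
    exact hYD y.2
  exact (ciInf_le (OrderBot.bddBelow _) ⟨_, hdense⟩).trans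
    (mk_preimage_of_injective _ _ Subtype.val_injective)

theorem exists_subset_closure_mk_eq_dens (Y : Set E) :
    ∃ D ⊆ Y, Y ⊆ closure D ∧ #D = dens Y := by
  have : Nonempty {D : Set Y // Dense D} := ⟨⟨univ, dense_univ⟩⟩
  obtain ⟨⟨D, hD⟩, hDY⟩ := csInf_mem (range_nonempty fun D : {D : Set Y // Dense D} => #D.1)
  refine ⟨Subtype.val '' D, image_subset_iff.2 fun y _ => y.2, fun y hy => ?_, ?_⟩
  · simpa [closure_subtype] using hD ⟨y, hy⟩
  · rw [mk_image_eq Subtype.val_injective]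
    exact hDY

theorem exists_subset_span_subset_closure_mk_le {R : Type*} [Semiring R] [TopologicalSpace R]
    [SeparableSpace R] [AddCommMonoid E] [Module R E] [PseudoMetrizableSpace E] [ContinuousAdd E]
    [ContinuousSMul R E] {S : Set E} {κ : Cardinal.{u}} (hκ : ℵ₀ ≤ κ) (hS : #S ≤ κ) :
    ∃ D ⊆ (Submodule.span R S : Set E), (Submodule.span R S : Set E) ⊆ closure D ∧ #D ≤ κ := by
  classical
  choose C hCsub hCcount hCdense using fun F : Finset S =>
    ((F.finite_toSet.image Subtype.val).isSeparable.span (R := R)).exists_countable_dense_subset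
  refine ⟨⋃ F, C F, iUnion_subset fun F => (hCsub F).trans
    (Submodule.span_mono (image_subset_iff.2 fun s _ => s.2)), fun x hx => ?_, ?_⟩
  · obtain ⟨T, hTS, hxT⟩ := Submodule.mem_span_finite_of_mem_span hx
    have hT : Subtype.val '' ((T.subtype (· ∈ S) : Finset S) : Set S) = T := by
      ext y
      simpa using fun hy => hTS hy
    exact closure_mono (subset_iUnion _ _) (hCdense _ (hT ▸ hxT))
  · exact (mk_iUnion_le _).trans <| mul_le_of_le hκ ((mk_finset_le_max S).trans (max_le hκ hS))
      ((ciSup_le' fun F => le_aleph0_iff_set_countable.2 (hCcount F)).trans hκ)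

end Density

namespace WeakDual

theorem exists_finset_setOf_eq_subset {𝕜 E : Type*} [CommSemiring 𝕜] [TopologicalSpace 𝕜]
    [ContinuousAdd 𝕜] [ContinuousConstSMul 𝕜 𝕜] [AddCommMonoid E] [Module 𝕜 E] [TopologicalSpace E]
    {V : Set (WeakDual 𝕜 E)} (hV : IsOpen V) {x : WeakDual 𝕜 E} (hx : x ∈ V) :
    ∃ F : Finset E, {φ : WeakDual 𝕜 E | ∀ a ∈ F, φ a = x a} ⊆ V := by
  obtain ⟨W, hW, rfl⟩ := isOpen_induced_iff.1 hV
  obtain ⟨F, u, hu, hFW⟩ := isOpen_pi_iff.1 hW _ hx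
  refine ⟨F, fun φ hφ => hFW fun a ha => ?_⟩
  change φ a ∈ u a
  rw [hφ a ha]
  exact (hu a ha).2

end WeakDual

theorem exists_one_le_norm_add_smul_sub_eq_one {E : Type*} [NormedAddCommGroup E]
    [NormedSpace ℝ E] {a b : E} (hab : a ≠ b) (hb : ‖b‖ ≤ 1) :
    ∃ t : ℝ, 1 ≤ t ∧ ‖a + t • (b - a)‖ = 1 := by
  have hba : 0 < ‖b - a‖ := norm_pos_iff.2 (sub_ne_zero.2 hab.symm)
  have htop : Tendsto (fun t : ℝ => ‖a + t • (b - a)‖) atTop atTop := by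
    refine tendsto_atTop_mono' _ ?_
      ((tendsto_id.atTop_mul_const hba).atTop_add (tendsto_const_nhds (x := -‖a‖)))
    filter_upwards [eventually_ge_atTop 0] with t ht
    have h := norm_sub_norm_le (t • (b - a)) (-a)
    rw [norm_smul, Real.norm_of_nonneg ht, norm_neg, sub_neg_eq_add, add_comm] at h
    simpa [sub_eq_add_neg] using h
  have hcont : Continuous fun t : ℝ => ‖a + t • (b - a)‖ := by fun_prop
  obtain ⟨t, ht, hta⟩ := intermediate_value_Ici hcont.continuousOn htop
    (show (1 : ℝ) ∈ Ici ‖a + (1 : ℝ) • (b - a)‖ by simpa using hb)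
  exact ⟨t, ht, hta⟩

theorem eq_of_norm_le_one_of_forall_norm_eq_one {X : Type*} [NormedAddCommGroup X]
    [NormedSpace ℝ X] {x : StrongDual ℝ X} {Y : Set X}
    (huniq : ∀ φ : StrongDual ℝ X, ‖φ‖ = 1 → (∀ y ∈ Y, φ y = x y) → φ = x)
    {φ : StrongDual ℝ X} (hφ : ‖φ‖ ≤ 1) (hφY : ∀ y ∈ Y, φ y = x y) : φ = x := by
  by_contra hne
  obtain ⟨t, ht, hnorm⟩ := exists_one_le_norm_add_smul_sub_eq_one (Ne.symm hne) hφ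
  have hline := huniq _ hnorm fun y hy => by simp [hφY y hy]
  simp [sub_eq_zero, (zero_lt_one.trans_le ht).ne', hne] at hline

section DualBall

variable {X : Type u} [NormedAddCommGroup X] [NormedSpace ℝ X]

theorem dualBall_eq_preimage_closedBall :
    dualBall X = WeakDual.toStrongDual ⁻¹' Metric.closedBall 0 1 := by
  ext φ
  simp [dualBall]

theorem exists_dens_le_of_relChar_dualBall_le {κ : Cardinal.{u}} (hκ : ℵ₀ ≤ κ)
    (x : StrongDual ℝ X) (h : relChar (dualBall X) (StrongDual.toWeakDual x) ≤ κ) :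
    ∃ Y : Submodule ℝ X, IsClosed (Y : Set X) ∧ dens Y ≤ κ ∧
      ∀ φ : X →L[ℝ] ℝ, ‖φ‖ = 1 → (∀ y ∈ Y, φ y = x y) → φ = x := by
  obtain ⟨B, hB, hBκ⟩ := exists_isRelNhdsBase_mk_eq_relChar (dualBall X) (StrongDual.toWeakDual x)
  choose F hF using fun V : B =>
    WeakDual.exists_finset_setOf_eq_subset (hB.1 V V.2).2 (hB.1 V V.2).1
  set S := ⋃ V, (F V : Set X)
  have hS : #S ≤ κ := (mk_iUnion_le _).trans <| mul_le_of_le hκ (hBκ.trans_le h) <|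
    (ciSup_le' fun V => (F V).finite_toSet.lt_aleph0.le).trans hκ
  obtain ⟨D, hDS, hSD, hD⟩ := exists_subset_span_subset_closure_mk_le (R := ℝ) hκ hS
  refine ⟨(Submodule.span ℝ S).topologicalClosure, Submodule.isClosed_topologicalClosure _,
    (dens_le_of_subset_closure ?_ ?_).trans hD, fun φ hφ hφY => ?_⟩
  · rw [Submodule.topologicalClosure_coe]
    exact hDS.trans subset_closure
  · rw [Submodule.topologicalClosure_coe]
    exact closure_minimal hSD isClosed_closure
  have hφB : StrongDual.toWeakDual φ ∈ ⋂₀ B ∩ dualBall X :=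
    ⟨fun V hV => hF ⟨V, hV⟩ fun a ha => hφY a (Submodule.le_topologicalClosure _
      (Submodule.subset_span (mem_iUnion_of_mem _ ha))), hφ.le⟩
  exact (StrongDual.toWeakDual_inj _ _).1 (hB.sInter_inter_subset hφB)

theorem relChar_dualBall_le_of_forall_eq {κ : Cardinal.{u}} (hκ : ℵ₀ ≤ κ) (x : StrongDual ℝ X)
    (Y : Set X) (hY : dens Y ≤ κ)
    (huniq : ∀ φ : X →L[ℝ] ℝ, ‖φ‖ = 1 → (∀ y ∈ Y, φ y = x y) → φ = x) :
    relChar (dualBall X) (StrongDual.toWeakDual x) ≤ κ := by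
  obtain ⟨D, -, hYD, hD⟩ := exists_subset_closure_mk_eq_dens Y
  let W : D × ULift.{u} ℕ → Set (WeakDual ℝ X) := fun i =>
    {φ | dist (φ i.1) (x i.1) < 1 / (i.2.down + 1)}
  have hdist (a : X) : Continuous fun φ : WeakDual ℝ X => dist (φ a) (x a) :=
    (WeakDual.eval_continuous a).dist continuous_const
  have hball : IsCompact (dualBall X) := by
    rw [dualBall_eq_preimage_closedBall]
    exact WeakDual.isCompact_closedBall 0 1
  refine (relChar_le_mk_finset_of_isCompact hball W (fun i => isOpen_lt (hdist _) continuous_const)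
    (fun i => by simp [W]; positivity) ?_).trans ((mk_finset_le_max _).trans (max_le hκ ?_))
  · rintro φ ⟨hφ, hφW⟩
    have hφD : ∀ d ∈ D, φ d = x d := fun d hd => eq_of_forall_dist_le fun ε hε => by
      obtain ⟨n, hn⟩ := exists_nat_one_div_lt hε
      exact (closure_lt_subset_le (hdist d) continuous_const
        (mem_iInter.1 hφW (⟨d, hd⟩, ⟨n⟩))).trans hn.le
    have hφY : ∀ y ∈ Y, φ y = x y := fun y hy =>
      EqOn.closure (fun d hd => hφD d hd) φ.continuous x.continuous (hYD hy)
    exact congrArg StrongDual.toWeakDual (eq_of_norm_le_one_of_forall_norm_eq_one huniq hφ hφY)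
  · rw [mk_prod, lift_id, lift_id, mk_uLift, mk_nat, lift_aleph0]
    exact mul_le_of_le hκ (hD.trans_le hY) hκ

end DualBall

theorem stmt7_general {X : Type u} [NormedAddCommGroup X] [NormedSpace ℝ X]
    (κ : Cardinal.{u}) (hκ : Cardinal.aleph0 ≤ κ)
    (xs : X →L[ℝ] ℝ) :
    relChar (dualBall X) (StrongDual.toWeakDual xs) ≤ κ ↔
      ∃ Y : Submodule ℝ X, IsClosed (Y : Set X) ∧ dens Y ≤ κ ∧
        ∀ φ : X →L[ℝ] ℝ, ‖φ‖ = 1 → (∀ y ∈ Y, φ y = xs y) → φ = xs :=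
  ⟨exists_dens_le_of_relChar_dualBall_le hκ xs,
    fun ⟨Y, _, hY, huniq⟩ => relChar_dualBall_le_of_forall_eq hκ xs Y hY huniq⟩

/-- for a norm-one functional `x*`, its character in the weak* dual ball is
`≤ κ` iff there is a closed subspace `Y ⊆ X` of density `≤ κ` such that `x*` is the unique
norm-one functional extending its restriction to `Y`. -/
theorem stmt7 {X : Type u} [NormedAddCommGroup X] [NormedSpace ℝ X] [CompleteSpace X]
    (κ : Cardinal.{u}) (hκ : Cardinal.aleph0 ≤ κ)
    (xs : X →L[ℝ] ℝ) (hxs : ‖xs‖ = 1) :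
    relChar (dualBall X) (StrongDual.toWeakDual xs) ≤ κ ↔
      ∃ Y : Submodule ℝ X, IsClosed (Y : Set X) ∧ dens Y ≤ κ ∧
        ∀ φ : X →L[ℝ] ℝ, ‖φ‖ = 1 → (∀ y ∈ Y, φ y = xs y) → φ = xs :=
  stmt7_general κ hκ xs
end

section
/- Let κ be an infinite cardinal, X a Banach space, Y ⊆ X a closed subspace, y* ∈ S_{Y*}, and suppose every x* ∈ E(y*) (the set of norm-one extensions of y* to X) has character κ in B_{X*} with the weak* topology. Then for every closed subspace W with Y ⊆ W ⊆ X of density < κ, every w* ∈ S_{W*} with w*|Y = y*, and every linearly dense subset D ⊆ X, there exists d ∈ D such that the set [w*](d) = {x*(d) : x* ∈ S_{X*}, x*|W = w*} contains a nondegenerate interval of ℝ. -/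
/-!
If `w*` had only one norm-one extension `φ`, then `φ` would be the only point of the weak* compact
dual ball agreeing with it on a dense subset of `W`; compactness then gives `φ` a neighbourhood
base relative to the ball of cardinality `dens W < κ`, contradicting the character hypothesis.
So there are two distinct extensions, they differ at some `d ∈ D` because `D` is linearly dense,
and since the extensions form a convex set their values at `d` fill the interval between.
-/

open Cardinal Set

universe u

lemma exists_dense_mk_eq_dens (T : Type u) [TopologicalSpace T] :
    ∃ s : Set T, Dense s ∧ #s = dens T := by
  have : Nonempty {s : Set T // Dense s} := ⟨⟨univ, dense_univ⟩⟩
  obtain ⟨⟨s, hs⟩, h⟩ := ciInf_mem fun s : {s : Set T // Dense s} => #s.1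
  exact ⟨s, hs, h⟩

lemma aleph0_le_dens {T : Type u} [TopologicalSpace T] [T1Space T] [Infinite T] :
    ℵ₀ ≤ dens T := by
  obtain ⟨s, hs, hmk⟩ := exists_dense_mk_eq_dens T
  by_contra! hlt
  have hfin : s.Finite := lt_aleph0_iff_set_finite.1 (hmk ▸ hlt)
  have : s = Set.univ := by rw [← hs.closure_eq, hfin.isClosed.closure_eq]
  exact infinite_univ (this ▸ hfin)

lemma isCompact_dualBall (X : Type u) [NormedAddCommGroup X] [NormedSpace ℝ X] :
    IsCompact (dualBall X) := by
  have : dualBall X = WeakDual.toStrongDual ⁻¹' Metric.closedBall 0 1 := by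
    ext ψ; simp [dualBall]
  exact this ▸ WeakDual.isCompact_closedBall (𝕜 := ℝ) 0 1

/- The finite intersections of the sets `|ψ (f i) - x (f i)| < 1 / (n + 1)` form a neighbourhood
base of `x` relative to `A`: otherwise, by compactness of `A \ U`, some point of `A \ U` would
agree with `x` at every `f i`. -/
lemma relChar_le_mk_of_forall_apply_eq {X : Type u} [NormedAddCommGroup X] [NormedSpace ℝ X]
    {ι : Type u} [Infinite ι] {A : Set (WeakDual ℝ X)} (hA : IsCompact A) (x : WeakDual ℝ X)
    (f : ι → X) (huniq : ∀ ψ ∈ A, (∀ i, ψ (f i) = x (f i)) → ψ = x) :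
    relChar A x ≤ #ι := by
  classical
  let C (p : ι × ℕ) : Set (WeakDual ℝ X) := {ψ | |ψ (f p.1) - x (f p.1)| ≤ 1 / (p.2 + 1)}
  let V (t : Finset (ι × ℕ)) : Set (WeakDual ℝ X) :=
    ⋂ p ∈ t, {ψ | |ψ (f p.1) - x (f p.1)| < 1 / (p.2 + 1)}
  have hmk : #(Finset (ι × ℕ)) = #ι := by
    rw [mk_finset_of_infinite, mk_prod, mk_nat]
    simp [mul_aleph0_eq (aleph0_le_mk ι)]
  refine le_trans (csInf_le' ⟨range V, rfl, ?_, ?_⟩) (mk_range_le.trans hmk.le)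
  · rintro _ ⟨t, rfl⟩
    refine ⟨mem_iInter₂.2 fun p _ => ?_, isOpen_biInter_finset fun p _ => ?_⟩
    · simp only [mem_ofPred_eq, sub_self, abs_zero]
      positivity
    · exact isOpen_lt ((WeakDual.eval_continuous _).sub continuous_const).abs continuous_const
  · intro U hU hxU
    have hempty : (A ∩ Uᶜ) ∩ ⋂ p, C p = ∅ := by
      refine eq_empty_iff_forall_notMem.2 fun ψ ⟨⟨hψA, hψU⟩, hψC⟩ => hψU ?_
      suffices hψx : ∀ i, ψ (f i) = x (f i) from huniq ψ hψA hψx ▸ hxU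
      intro i
      have hle : ∀ n : ℕ, |ψ (f i) - x (f i)| ≤ 1 / (n + 1) := fun n => mem_iInter.1 hψC (i, n)
      exact sub_eq_zero.1 <| abs_nonpos_iff.1 <|
        ge_of_tendsto' tendsto_one_div_add_atTop_nhds_zero_nat hle
    obtain ⟨t, ht⟩ := (hA.inter_right hU.isClosed_compl).elim_finite_subfamily_closed C
      (fun p => isClosed_le ((WeakDual.eval_continuous _).sub continuous_const).abs
        continuous_const) hempty
    refine ⟨V t, mem_range_self t, fun ψ ⟨hψV, hψA⟩ => by_contra fun hψU => ?_⟩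
    have : ψ ∈ (A ∩ Uᶜ) ∩ ⋂ p ∈ t, C p :=
      ⟨⟨hψA, hψU⟩, mem_iInter₂.2 fun p hp => (mem_iInter₂.1 hψV p hp).out.le⟩
    rwa [ht] at this

section Extensions

variable {X : Type u} [NormedAddCommGroup X] [NormedSpace ℝ X] {W : Submodule ℝ X}
  {ws : W →L[ℝ] ℝ}

def normOneExtensions (ws : W →L[ℝ] ℝ) : Set (X →L[ℝ] ℝ) :=
  {φ | ‖φ‖ = 1 ∧ ∀ w : W, φ w = ws w}

lemma norm_le_of_forall_apply_eq {φ : X →L[ℝ] ℝ} (hφ : ∀ w : W, φ w = ws w) : ‖ws‖ ≤ ‖φ‖ :=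
  ws.opNorm_le_bound (norm_nonneg φ) fun w => hφ w ▸ φ.le_opNorm w

lemma mem_normOneExtensions_of_norm_le (hws : ‖ws‖ = 1) {φ : X →L[ℝ] ℝ} (hle : ‖φ‖ ≤ 1)
    (hφ : ∀ w : W, φ w = ws w) : φ ∈ normOneExtensions ws :=
  ⟨le_antisymm hle (hws ▸ norm_le_of_forall_apply_eq hφ), hφ⟩

lemma exists_mem_normOneExtensions (hws : ‖ws‖ = 1) : ∃ φ, φ ∈ normOneExtensions ws := by
  obtain ⟨φ, hφ, hnorm⟩ := exists_extension_norm_eq W ws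
  exact ⟨φ, hnorm.trans hws, hφ⟩

lemma convex_normOneExtensions (hws : ‖ws‖ = 1) : Convex ℝ (normOneExtensions ws) := by
  intro φ₁ h₁ φ₂ h₂ a b ha hb hab
  refine mem_normOneExtensions_of_norm_le hws ?_ fun w => ?_
  · simpa using convex_closedBall (0 : X →L[ℝ] ℝ) 1 (by simp [h₁.1]) (by simp [h₂.1]) ha hb hab
  · simp [h₁.2, h₂.2, ← add_mul, hab]

lemma uIcc_subset_image_normOneExtensions (hws : ‖ws‖ = 1) {φ₁ φ₂ : X →L[ℝ] ℝ}
    (h₁ : φ₁ ∈ normOneExtensions ws) (h₂ : φ₂ ∈ normOneExtensions ws) (d : X) :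
    uIcc (φ₁ d) (φ₂ d) ⊆ (fun φ => φ d) '' normOneExtensions ws :=
  ((convex_normOneExtensions hws).linear_image (ContinuousLinearMap.apply ℝ ℝ d).toLinearMap
    ).ordConnected.uIcc_subset (mem_image_of_mem _ h₁) (mem_image_of_mem _ h₂)

lemma eq_of_normOneExtensions_subsingleton (hws : ‖ws‖ = 1)
    (hE : (normOneExtensions ws).Subsingleton) {φ : X →L[ℝ] ℝ} (hφ : φ ∈ normOneExtensions ws)
    {s : Set W} (hs : Dense s) {ψ : WeakDual ℝ X} (hψ : ψ ∈ dualBall X)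
    (hψs : ∀ w : s, ψ (w : W) = φ (w : W)) : ψ = StrongDual.toWeakDual φ := by
  have hψW : (WeakDual.toStrongDual ψ).comp W.subtypeL = ws :=
    ContinuousLinearMap.ext_on (hs.mono Submodule.subset_span) fun w hw =>
      (hψs ⟨w, hw⟩).trans (hφ.2 w)
  exact hE (mem_normOneExtensions_of_norm_le hws hψ fun w => congr($hψW w)) hφ

lemma relChar_le_dens_of_normOneExtensions_subsingleton (hws : ‖ws‖ = 1)
    (hE : (normOneExtensions ws).Subsingleton) {φ : X →L[ℝ] ℝ}
    (hφ : φ ∈ normOneExtensions ws) :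
    relChar (dualBall X) (StrongDual.toWeakDual φ) ≤ dens W := by
  have : Nontrivial W := by
    by_contra h
    rw [not_nontrivial_iff_subsingleton] at h
    simp [Subsingleton.elim ws 0] at hws
  have : Infinite W := Module.Free.infinite ℝ W
  obtain ⟨s, hs, hmk⟩ := exists_dense_mk_eq_dens W
  have : Infinite s := infinite_iff.2 (hmk ▸ aleph0_le_dens)
  exact hmk ▸ relChar_le_mk_of_forall_apply_eq (isCompact_dualBall X) _ (fun w : s => (w : W))
    fun ψ hψ => eq_of_normOneExtensions_subsingleton hws hE hφ hs hψ

end Extensions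

lemma LinearlyDense.exists_apply_ne {X : Type u} [NormedAddCommGroup X] [NormedSpace ℝ X]
    {D : Set X} (hD : LinearlyDense D) {φ₁ φ₂ : X →L[ℝ] ℝ} (hne : φ₁ ≠ φ₂) :
    ∃ d ∈ D, φ₁ d ≠ φ₂ d := by
  by_contra! h
  exact hne (ContinuousLinearMap.ext_on (Submodule.dense_iff_topologicalClosure_eq_top.2 hD) h)

theorem stmt8_general {X : Type u} [NormedAddCommGroup X] [NormedSpace ℝ X]
    {κ : Cardinal.{u}}
    (Y : Submodule ℝ X)
    (ys : Y →L[ℝ] ℝ)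
    (hchar : ∀ φ : X →L[ℝ] ℝ, ‖φ‖ = 1 → (∀ y : Y, φ (y : X) = ys y) →
      relChar (dualBall X) (StrongDual.toWeakDual φ) = κ)
    (W : Submodule ℝ X) (hYW : Y ≤ W) (hWd : dens W < κ)
    (ws : W →L[ℝ] ℝ) (hws : ‖ws‖ = 1)
    (hres : ∀ y : Y, ws ⟨y.1, hYW y.2⟩ = ys y)
    (D : Set X) (hD : LinearlyDense D) :
    ∃ d ∈ D, ∃ a b : ℝ, a < b ∧ Set.Ioo a b ⊆
      {r : ℝ | ∃ φ : X →L[ℝ] ℝ, ‖φ‖ = 1 ∧ (∀ w : W, φ (w : X) = ws w) ∧ φ d = r} := by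
  obtain ⟨φ₀, hφ₀⟩ := exists_mem_normOneExtensions hws
  have hE : ¬ (normOneExtensions ws).Subsingleton := fun hE =>
    (hchar φ₀ hφ₀.1 (fun y => (hφ₀.2 _).trans (hres y)) ▸
      relChar_le_dens_of_normOneExtensions_subsingleton hws hE hφ₀).not_gt hWd
  obtain ⟨φ₁, h₁, φ₂, h₂, hne⟩ := Set.not_subsingleton_iff.1 hE
  obtain ⟨d, hdD, hd⟩ := hD.exists_apply_ne hne
  refine ⟨d, hdD, _, _, min_lt_max.2 hd, fun r hr => ?_⟩
  obtain ⟨φ, hφ, rfl⟩ := uIcc_subset_image_normOneExtensions hws h₁ h₂ d (Ioo_subset_Icc_self hr)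
  exact ⟨φ, hφ.1, hφ.2, rfl⟩

/-- if every norm-one extension of `y*` to `X` has character `κ` in the dual
ball, then for every intermediate closed subspace `W` of density `< κ`, every norm-one
`w* ∈ S_{W*}` extending `y*`, and every linearly dense `D ⊆ X`, there is `d ∈ D` such that
`[w*](d)` contains a nondegenerate interval. -/
theorem stmt8 {X : Type u} [NormedAddCommGroup X] [NormedSpace ℝ X] [CompleteSpace X]
    {κ : Cardinal.{u}} (hκ : Cardinal.aleph0 ≤ κ)
    (Y : Submodule ℝ X) (hYc : IsClosed (Y : Set X))
    (ys : Y →L[ℝ] ℝ) (hys : ‖ys‖ = 1)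
    (hchar : ∀ φ : X →L[ℝ] ℝ, ‖φ‖ = 1 → (∀ y : Y, φ (y : X) = ys y) →
      relChar (dualBall X) (StrongDual.toWeakDual φ) = κ)
    (W : Submodule ℝ X) (hYW : Y ≤ W) (hWc : IsClosed (W : Set X)) (hWd : dens W < κ)
    (ws : W →L[ℝ] ℝ) (hws : ‖ws‖ = 1)
    (hres : ∀ y : Y, ws ⟨y.1, hYW y.2⟩ = ys y)
    (D : Set X) (hD : LinearlyDense D) :
    ∃ d ∈ D, ∃ a b : ℝ, a < b ∧ Set.Ioo a b ⊆
      {r : ℝ | ∃ φ : X →L[ℝ] ℝ, ‖φ‖ = 1 ∧ (∀ w : W, φ (w : X) = ws w) ∧ φ d = r} :=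
  stmt8_general Y ys hchar W hYW hWd ws hws hres D hD
end

section
/- Let κ be a cardinal with cf(κ) > ω₁, and let K be a compact Hausdorff scattered space such that C(K) has density κ. Then for every family {f_ξ : ξ < κ} ⊆ C(K) there exist a set A ⊆ κ of cardinality κ and two distinct points x, y ∈ K such that f_ξ(x) = f_ξ(y) for all ξ ∈ A. Consequently C(K) does not admit an overcomplete set. -/
open Cardinal Set

universe u

def Scattered (K : Type u) [TopologicalSpace K] : Prop :=
  ∀ S : Set K, S.Nonempty → ∃ x ∈ S, ∃ U : Set K, IsOpen U ∧ U ∩ S = {x}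

/-!
A continuous real function on a compact scattered space has countable range: otherwise its range
contains a nonempty perfect set `D`, and the isolated point of a minimal closed set mapping onto
`D` would produce an isolated point of `D`.

Every `f ξ` therefore identifies two points of any subset `S ⊆ K` with `|S| = ℵ₁`; if `K` is
countable, take `S = K`: an injective `f ξ` would embed `K` into `ℝ` and make `C(K)` separable.
There are fewer than `cf κ` pairs of points of `S`, so by the infinite pigeonhole principle one
pair is identified by `κ` many `f ξ`. Such a subfamily lies in the closed hyperplane
`{g | g x = g y}`, so it is not linearly dense, and no overcomplete set exists.
-/

open Function

section CompactDomain

variable {K X : Type*} [TopologicalSpace K] [CompactSpace K] [TopologicalSpace X]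

theorem image_sInter_eq_biInter_image_of_directedOn [T1Space X] {f : K → X} (hf : Continuous f)
    {c : Set (Set K)} (hne : c.Nonempty) (hdir : DirectedOn (· ⊇ ·) c)
    (hcl : ∀ C ∈ c, IsClosed C) : f '' ⋂₀ c = ⋂ C ∈ c, f '' C := by
  refine (image_sInter_subset c f).antisymm fun p hp => ?_
  have := hne.to_subtype
  have hfib : ∀ C : c, IsClosed ((C : Set K) ∩ f ⁻¹' {p}) :=
    fun C => (hcl C C.2).inter (isClosed_singleton.preimage hf)
  obtain ⟨z, hz⟩ := IsCompact.nonempty_iInter_of_directed_nonempty_isCompact_isClosed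
    (fun C : c => (C : Set K) ∩ f ⁻¹' {p})
    (hdir.directed_val.mono_comp (· ⊇ ·) (g := (· ∩ f ⁻¹' {p}))
      fun _ _ h => inter_subset_inter_left _ h)
    (fun C => by obtain ⟨z, hz, rfl⟩ := mem_iInter₂.1 hp C C.2; exact ⟨z, hz, rfl⟩)
    (fun C => (hfib C).isCompact) hfib
  rw [mem_iInter] at hz
  exact ⟨z, fun C hC => (hz ⟨C, hC⟩).1, (hz (Classical.arbitrary c)).2⟩

theorem exists_minimal_isClosed_image_eq [T1Space X] {f : K → X} (hf : Continuous f)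
    {D : Set X} (hDc : IsClosed D) (hD : D ⊆ range f) :
    ∃ C, Minimal (fun C : Set K => IsClosed C ∧ f '' C = D) C := by
  refine (zorn_superset_nonempty {C | IsClosed C ∧ f '' C = D} (fun c hcS hchain hne => ?_)
    (f ⁻¹' D) ⟨hDc.preimage hf, image_preimage_eq_of_subset hD⟩).imp fun _ h => h.2
  refine ⟨⋂₀ c, ⟨isClosed_sInter fun C hC => (hcS hC).1, ?_⟩, fun _ => sInter_subset_of_mem⟩
  have hdir : DirectedOn (· ⊇ ·) c := fun a ha b hb =>
    (hchain.total ha hb).elim (fun h => ⟨a, ha, subset_rfl, h⟩) fun h => ⟨b, hb, h, subset_rfl⟩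
  rw [image_sInter_eq_biInter_image_of_directedOn hf hne hdir fun C hC => (hcS hC).1]
  exact (iInter₂_congr fun C hC => (hcS hC).2).trans (biInter_const hne D)

theorem Scattered.countable_range [T2Space X] [SecondCountableTopology X] (hK : Scattered K)
    {f : K → X} (hf : Continuous f) : (range f).Countable := by
  by_contra hunc
  obtain ⟨D, hDperf, hDne, hDsub⟩ :=
    exists_perfect_nonempty_of_isClosed_of_not_countable (isCompact_range hf).isClosed hunc
  obtain ⟨m, hm⟩ := exists_minimal_isClosed_image_eq hf hDperf.closed hDsub
  obtain ⟨hmcl, hmD⟩ := hm.prop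
  obtain ⟨x, hxm, U, hU, hUm⟩ := hK m (hmD ▸ hDne).of_image
  have hxU : x ∈ U := (hUm.symm ▸ rfl : x ∈ U ∩ m).1
  -- `x` is the only point of `m` over `D \ f '' (m \ U)`, a relatively open subset of `D`
  have hfib : (f '' (m \ U))ᶜ ∩ D ⊆ {f x} := by
    rintro r ⟨hr, hrD⟩
    obtain ⟨z, hzm, rfl⟩ := hmD ▸ hrD
    have hzU : z ∈ U := by_contra fun hz => hr ⟨z, ⟨hzm, hz⟩, rfl⟩
    rw [show z = x from (hUm.subset ⟨hzU, hzm⟩ : z ∈ ({x} : Set K))]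
    rfl
  obtain ⟨p, hpD, hp⟩ : ∃ p ∈ D, p ∉ f '' (m \ U) := by
    by_contra! h
    have hm' : m ⊆ m \ U :=
      hm.2 ⟨hmcl.sdiff hU, ((image_mono sdiff_subset).trans_eq hmD).antisymm h⟩ sdiff_subset
    exact (hm' hxm).2 hxU
  obtain ⟨q, hq, hqp⟩ := preperfect_iff_nhds.1 hDperf.acc p hpD _
    (((hmcl.sdiff hU).isCompact.image hf).isClosed.isOpen_compl.mem_nhds hp)
  exact hqp ((hfib hq).trans (hfib ⟨hp, hpD⟩).symm)

end CompactDomain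

theorem exists_ne_mk_setOf_apply_eq_of_not_injOn {ι α : Type u} {β : Type*} (f : ι → α → β)
    (S : Set α) (hι : ℵ₀ ≤ #ι) (hS : #(S × S) < (#ι).ord.cof) (hf : ∀ i, ¬InjOn (f i) S) :
    ∃ x y, x ≠ y ∧ #{i | f i x = f i y} = #ι := by
  have hpair : ∀ i, ∃ p : S × S, (p.1 : α) ≠ p.2 ∧ f i p.1 = f i p.2 := fun i => by
    have := hf i
    simp only [InjOn, not_forall, exists_prop] at this
    obtain ⟨x, hx, y, hy, hfxy, hxy⟩ := this
    exact ⟨(⟨x, hx⟩, ⟨y, hy⟩), hxy, hfxy⟩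
  choose p hp using hpair
  obtain ⟨a, ha⟩ := infinite_pigeonhole p hι hS
  obtain ⟨i, rfl⟩ : ∃ i, p i = a := by
    obtain ⟨⟨i, hi⟩⟩ := mk_ne_zero_iff.1 (ha ▸ (aleph0_pos.trans_le hι).ne')
    exact ⟨i, hi⟩
  refine ⟨_, _, (hp i).1, (mk_set_le _).antisymm (ha ▸ mk_le_mk_of_subset fun j hj => ?_)⟩
  rw [mem_preimage, mem_singleton_iff] at hj
  exact hj ▸ (hp j).2

theorem dens_le_aleph0 (X : Type u) [TopologicalSpace X] [TopologicalSpace.SeparableSpace X] :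
    dens X ≤ ℵ₀ := by
  obtain ⟨s, hsc, hsd⟩ := TopologicalSpace.exists_countable_dense X
  exact (ciInf_le (OrderBot.bddBelow _) ⟨s, hsd⟩).trans (mk_le_aleph0_iff.2 hsc.to_subtype)

theorem dens_le_aleph0_of_injective {K : Type u} [TopologicalSpace K] [CompactSpace K]
    [T2Space K] {f : C(K, ℝ)} (hf : Injective f) : dens C(K, ℝ) ≤ ℵ₀ := by
  have := (f.continuous.isClosedEmbedding hf).isEmbedding.secondCountableTopology
  exact dens_le_aleph0 _

theorem Scattered.exists_ne_mk_setOf_apply_eq {K : Type u} [TopologicalSpace K] [CompactSpace K]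
    [T2Space K] (hK : Scattered K) (hdens : ℵ₀ < dens C(K, ℝ)) {ι : Type u}
    (hcf : ℵ₁ < (#ι).ord.cof) (f : ι → C(K, ℝ)) :
    ∃ x y : K, x ≠ y ∧ #{i | f i x = f i y} = #ι := by
  have hι : ℵ₀ ≤ #ι := (aleph0_lt_aleph_one.trans (hcf.trans_le (Ordinal.cof_ord_le _))).le
  by_cases hKc : Countable K
  · refine exists_ne_mk_setOf_apply_eq_of_not_injOn (fun i => f i) univ hι ?_
      fun i h => (dens_le_aleph0_of_injective (injOn_univ.1 h)).not_gt hdens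
    exact mk_le_aleph0.trans_lt (aleph0_lt_aleph_one.trans hcf)
  · obtain ⟨S, hS⟩ := le_mk_iff_exists_set.1 (aleph_one_le_iff.2 (aleph0_lt_mk_iff.2
      (not_countable_iff.1 hKc)))
    refine exists_ne_mk_setOf_apply_eq_of_not_injOn (fun i => f i) S hι ?_ fun i h => ?_
    · rwa [mk_prod, lift_id, hS, mul_eq_self (aleph0_le_aleph 1)]
    · have hSc := (mapsTo_range _ _).countable_of_injOn h (hK.countable_range (f i).continuous)
      exact (le_aleph0_iff_set_countable.2 hSc).not_gt (hS ▸ aleph0_lt_aleph_one)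

theorem LinearlyDense.exists_apply_ne_s16 {K : Type u} [TopologicalSpace K] [CompactSpace K]
    [T2Space K] {Z : Set C(K, ℝ)} (hZ : LinearlyDense Z) {x y : K} (hxy : x ≠ y) :
    ∃ g ∈ Z, g x ≠ g y := by
  by_contra! h
  let L : C(K, ℝ) →L[ℝ] ℝ := ContinuousMap.evalCLM ℝ x - ContinuousMap.evalCLM ℝ y
  have hker := Submodule.topologicalClosure_minimal _
    (Submodule.span_le.2 fun g hg => sub_eq_zero.2 (h g hg)) L.isClosed_ker
  rw [hZ] at hker
  obtain ⟨g, hgx, hgy, -⟩ := exists_continuous_zero_one_of_isClosed isClosed_singleton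
    isClosed_singleton (disjoint_singleton.2 hxy)
  have : g x - g y = 0 := hker Submodule.mem_top
  simp [hgx rfl, hgy rfl] at this

/-- for `K` compact Hausdorff scattered with `dens C(K) = κ` and
`cf κ > ω₁`: every `κ`-indexed family in `C(K)` has a `κ`-sized subfamily failing to
separate two points; consequently `C(K)` admits no overcomplete set. -/
theorem stmt16 {K : Type u} [TopologicalSpace K] [CompactSpace K] [T2Space K]
    (hK : Scattered K) {κ : Cardinal.{u}}
    (hcf : Cardinal.aleph 1 < (κ.ord).cof) (hdens : dens C(K, ℝ) = κ)
    {ι : Type u} (hι : Cardinal.mk ι = κ) :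
    (∀ f : ι → C(K, ℝ), ∃ A : Set ι, Cardinal.mk ↥A = κ ∧
      ∃ x y : K, x ≠ y ∧ ∀ ξ ∈ A, f ξ x = f ξ y) ∧
    ¬ ∃ Y : Set C(K, ℝ), Overcomplete Y := by
  have hdens' : ℵ₀ < dens C(K, ℝ) :=
    hdens ▸ aleph0_lt_aleph_one.trans (hcf.trans_le (Ordinal.cof_ord_le κ))
  have hpair : ∀ {ι : Type u}, #ι = κ → ∀ f : ι → C(K, ℝ), ∃ A : Set ι, #A = κ ∧
      ∃ x y : K, x ≠ y ∧ ∀ ξ ∈ A, f ξ x = f ξ y := by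
    rintro ι rfl f
    obtain ⟨x, y, hxy, hA⟩ := hK.exists_ne_mk_setOf_apply_eq hdens' hcf f
    exact ⟨_, hA, x, y, hxy, fun _ => id⟩
  refine ⟨hpair hι, ?_⟩
  rintro ⟨Y, hYκ, hY⟩
  obtain ⟨A, hA, x, y, hxy, hAxy⟩ := hpair (hYκ.trans hdens) ((↑) : Y → C(K, ℝ))
  have hZ : LinearlyDense (((↑) : Y → C(K, ℝ)) '' A) := hY _ (Subtype.coe_image_subset _ _)
    (by rw [mk_image_eq Subtype.val_injective, hA, hYκ, hdens])
  obtain ⟨_, ⟨g, hg, rfl⟩, hne⟩ := hZ.exists_apply_ne_s16 hxy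
  exact hne (hAxy g hg)
end
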